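/- arXiv:1709.08095 — 6 statements merged into one kernel-verified Lean document; each statement's English description precedes it below -/
import Mathlib

section
/- Let 1 ≤ p ≤ q < ∞ and z ∈ ℂ, and suppose the two-point inequality holds for (p,q,z). Then for every n ≥ 1 and every function f : {-1,1}^n → ℂ one has (𝔼 |T_z f|^q)^{1/q} ≤ (𝔼 |f|^p)^{1/p}, where 𝔼 denotes the average over the uniform measure on {-1,1}^n. -/
open MeasureTheory Finset

noncomputable section

/-- The ±1 value of a Boolean coordinate. -/
def sgn (b : Bool) : ℝ := if b then 1 else -1

/-- Walsh function `W_S(x) = ∏_{j ∈ S} x_j`. -/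
def walsh {n : ℕ} (S : Finset (Fin n)) (x : Fin n → Bool) : ℂ :=
  ∏ j ∈ S, (sgn (x j) : ℂ)

/-- Fourier–Walsh coefficient `f̂(S) = 𝔼 f·W_S`. -/
def walshCoeff {n : ℕ} (f : (Fin n → Bool) → ℂ) (S : Finset (Fin n)) : ℂ :=
  (∑ x : Fin n → Bool, f x * walsh S x) / 2 ^ n

/-- `T_z^k f = ∑_S z^{|S ∩ {k+1,…,n}|} f̂(S) W_S`. -/
def Tzk {n : ℕ} (z : ℂ) (k : ℕ) (f : (Fin n → Bool) → ℂ) : (Fin n → Bool) → ℂ :=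
  fun x => ∑ S : Finset (Fin n),
    z ^ (S.filter (fun j : Fin n => k ≤ (j : ℕ))).card * walshCoeff f S * walsh S x

/-- The two-point inequality for `(p,q,z)`. -/
def TwoPointIneq (p q : ℝ) (z : ℂ) : Prop :=
  ∀ a b : ℂ,
    ((‖a + z * b‖ ^ q + ‖a - z * b‖ ^ q) / 2) ^ (1 / q)
      ≤ ((‖a + b‖ ^ p + ‖a - b‖ ^ p) / 2) ^ (1 / p)

/-- Combine a point of `{-1,1}^k` and a point of `{-1,1}^{n-k}` into a point of `{-1,1}^n`. -/
def merge (n k : ℕ) (a : Fin k → Bool) (b : Fin (n - k) → Bool) : Fin n → Bool :=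
  fun i => if h : (i : ℕ) < k then a ⟨i, h⟩
           else b ⟨(i : ℕ) - k, by have := i.isLt; omega⟩

/-- Symmetric function `φ_ℓ(x_1,…,x_n) = ℓ! ∑_{m_1<⋯<m_ℓ} x_{m_1}⋯x_{m_ℓ}`. -/
def phi (ℓ : ℕ) {n : ℕ} (x : Fin n → ℂ) : ℂ :=
  (ℓ.factorial : ℂ) * ∑ S ∈ Finset.powersetCard ℓ (Finset.univ : Finset (Fin n)), ∏ j ∈ S, x j

/-- Standard Gaussian measure on ℝ. -/
def γ : Measure ℝ := ProbabilityTheory.gaussianReal 0 1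

/-- Hermite polynomial `H_m(x) = ∫ (x+iy)^m dγ(y)`, at a complex argument. -/
def Hpoly (m : ℕ) (x : ℂ) : ℂ := ∫ y : ℝ, (x + Complex.I * (y : ℂ)) ^ m ∂γ

/-- Analytically extended heat flow `P_τ h (ξ)`. -/
def heatP (τ : ℂ) (h : ℂ → ℂ) (ξ : ℂ) : ℂ :=
  ∫ t : ℝ, h (t : ℂ) * Complex.exp (-(ξ - (t : ℂ)) ^ 2 / (2 * τ)) /
    ((2 * (Real.pi : ℂ) * τ) ^ ((1 : ℂ) / 2))

/-- Sum of the first `k` coordinates. -/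
def sumLow (n k : ℕ) (x : Fin n → Bool) : ℝ :=
  ∑ i ∈ Finset.univ.filter (fun i : Fin n => (i : ℕ) < k), sgn (x i)

/-- Sum of the last `n - k` coordinates. -/
def sumHigh (n k : ℕ) (x : Fin n → Bool) : ℝ :=
  ∑ i ∈ Finset.univ.filter (fun i : Fin n => k ≤ (i : ℕ)), sgn (x i)

/-! In the kernel form `T_z f(x) = 𝔼_y f(y) ∏ⱼ (1 + z xⱼ yⱼ)` the operator acts on one coordinate
at a time: splitting off the first coordinate, `T_z f(±1, y) = (u + v)/2 ± z (u - v)/2`, where `u`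
and `v` are the images under `T_z` of the two restrictions of `f`. The two-point inequality bounds
the `L^q` norm in the first coordinate by `((|u|^p + |v|^p)/2)^{1/p}`, Minkowski's inequality in
`L^{q/p}` of the remaining coordinates splits the `p`-th power of the resulting bound into
`(‖u‖_q^p + ‖v‖_q^p)/2`, and induction on `n` bounds that by `‖f‖_p^p`. -/

section BooleanCube

variable {n : ℕ}

def cubeMean {𝕜 : Type*} [Field 𝕜] (g : (Fin n → Bool) → 𝕜) : 𝕜 :=
  (∑ x, g x) / 2 ^ n

def cubeNorm {E : Type*} [Norm E] (r : ℝ) (g : (Fin n → Bool) → E) : ℝ :=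
  cubeMean (fun x => ‖g x‖ ^ r) ^ (1 / r)

section Mean

variable {𝕜 : Type*} [Field 𝕜]

lemma cubeMean_fin_zero (g : (Fin 0 → Bool) → 𝕜) (x : Fin 0 → Bool) : cubeMean g = g x := by
  rw [cubeMean, Fintype.sum_subsingleton _ x, pow_zero, div_one]

lemma cubeMean_succ (g : (Fin (n + 1) → Bool) → 𝕜) :
    cubeMean g = cubeMean fun y => (g (Fin.cons true y) + g (Fin.cons false y)) / 2 := by
  rw [cubeMean, cubeMean, ← Finset.sum_div, div_div, ← pow_succ',
    ← (Fin.consEquiv fun _ => Bool).sum_comp, Fintype.sum_prod_type]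
  simp [Fin.consEquiv, Finset.sum_add_distrib]

lemma cubeMean_add_div_two (g h : (Fin n → Bool) → 𝕜) :
    cubeMean (fun x => (g x + h x) / 2) = (cubeMean g + cubeMean h) / 2 := by
  simp only [cubeMean, ← Finset.sum_div, Finset.sum_add_distrib]
  ring

lemma cubeMean_const_mul (c : 𝕜) (g : (Fin n → Bool) → 𝕜) :
    cubeMean (fun x => c * g x) = c * cubeMean g := by
  rw [cubeMean, cubeMean, ← Finset.mul_sum, mul_div_assoc]

end Mean

lemma cubeMean_nonneg {g : (Fin n → Bool) → ℝ} (hg : ∀ x, 0 ≤ g x) : 0 ≤ cubeMean g :=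
  div_nonneg (Finset.sum_nonneg fun x _ => hg x) (by positivity)

lemma cubeMean_mono {g h : (Fin n → Bool) → ℝ} (hgh : ∀ x, g x ≤ h x) :
    cubeMean g ≤ cubeMean h :=
  div_le_div_of_nonneg_right (Finset.sum_le_sum fun x _ => hgh x) (by positivity)

section Norm

variable {E : Type*} [SeminormedAddGroup E] {r : ℝ}

lemma cubeMean_norm_rpow_nonneg (g : (Fin n → Bool) → E) :
    0 ≤ cubeMean fun x => ‖g x‖ ^ r :=
  cubeMean_nonneg fun _ => Real.rpow_nonneg (norm_nonneg _) r

lemma cubeNorm_nonneg (g : (Fin n → Bool) → E) : 0 ≤ cubeNorm r g :=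
  Real.rpow_nonneg (cubeMean_norm_rpow_nonneg g) _

lemma cubeNorm_rpow (hr : r ≠ 0) (g : (Fin n → Bool) → E) :
    cubeNorm r g ^ r = cubeMean fun x => ‖g x‖ ^ r := by
  rw [cubeNorm, one_div, Real.rpow_inv_rpow (cubeMean_norm_rpow_nonneg g) hr]

lemma cubeNorm_fin_zero (hr : r ≠ 0) (g : (Fin 0 → Bool) → E) (x : Fin 0 → Bool) :
    cubeNorm r g = ‖g x‖ := by
  rw [cubeNorm, cubeMean_fin_zero _ x, one_div, Real.rpow_rpow_inv (norm_nonneg _) hr]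

lemma cubeNorm_rpow_succ (hr : r ≠ 0) (g : (Fin (n + 1) → Bool) → E) :
    cubeNorm r g ^ r = (cubeNorm r (fun y => g (Fin.cons true y)) ^ r
      + cubeNorm r (fun y => g (Fin.cons false y)) ^ r) / 2 := by
  rw [cubeNorm_rpow hr, cubeNorm_rpow hr, cubeNorm_rpow hr, cubeMean_succ, cubeMean_add_div_two]

lemma cubeNorm_add_le (hr : 1 ≤ r) (g h : (Fin n → Bool) → E) :
    cubeNorm r (g + h) ≤ cubeNorm r g + cubeNorm r h := by
  have hr₀ : 0 ≤ 1 / r := by positivity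
  have h2n : (0 : ℝ) ≤ 2 ^ n := by positivity
  calc cubeNorm r (g + h)
      ≤ cubeMean (fun x => (‖g x‖ + ‖h x‖) ^ r) ^ (1 / r) := by
        refine Real.rpow_le_rpow (cubeMean_norm_rpow_nonneg _) (cubeMean_mono fun x => ?_) hr₀
        exact Real.rpow_le_rpow (norm_nonneg _) (norm_add_le _ _) (by linarith)
    _ ≤ cubeNorm r g + cubeNorm r h := by
        simp only [cubeNorm, cubeMean]
        rw [Real.div_rpow (Finset.sum_nonneg fun _ _ => by positivity) h2n,
          Real.div_rpow (Finset.sum_nonneg fun _ _ => by positivity) h2n,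
          Real.div_rpow (Finset.sum_nonneg fun _ _ => by positivity) h2n, ← add_div]
        gcongr
        exact Real.Lp_add_le_of_nonneg _ hr (fun _ _ => norm_nonneg _) fun _ _ => norm_nonneg _

lemma cubeNorm_norm_rpow {s : ℝ} (hr : 0 < r) (hs : 0 < s) (g : (Fin n → Bool) → E) :
    cubeNorm r (fun x => ‖g x‖ ^ s) = cubeNorm (s * r) g ^ s := by
  have hg : ∀ x, ‖‖g x‖ ^ s‖ ^ r = ‖g x‖ ^ (s * r) := fun x => by
    rw [Real.norm_of_nonneg (by positivity), ← Real.rpow_mul (norm_nonneg _)]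
  rw [cubeNorm, cubeNorm, funext hg, ← Real.rpow_mul (cubeMean_norm_rpow_nonneg g)]
  congr 1
  field_simp

end Norm

lemma cubeNorm_smul {𝕜 E : Type*} [NormedField 𝕜] [SeminormedAddCommGroup E] [NormedSpace 𝕜 E]
    {r : ℝ} (hr : 0 < r) (c : 𝕜) (g : (Fin n → Bool) → E) :
    cubeNorm r (c • g) = ‖c‖ * cubeNorm r g := by
  have hc : ∀ x, ‖(c • g) x‖ ^ r = ‖c‖ ^ r * ‖g x‖ ^ r := fun x => by
    rw [Pi.smul_apply, norm_smul, Real.mul_rpow (norm_nonneg _) (norm_nonneg _)]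
  rw [cubeNorm, cubeNorm, funext hc, cubeMean_const_mul,
    Real.mul_rpow (by positivity) (cubeMean_norm_rpow_nonneg g), one_div,
    Real.rpow_rpow_inv (norm_nonneg _) hr.ne']

end BooleanCube

lemma TwoPointIneq.norm_rpow_add_le {p q : ℝ} {z : ℂ} (h : TwoPointIneq p q z) (hq : 0 < q)
    (u v : ℂ) :
    (‖(u + v) / 2 + z * ((u - v) / 2)‖ ^ q + ‖(u + v) / 2 - z * ((u - v) / 2)‖ ^ q) / 2
      ≤ ((‖u‖ ^ p + ‖v‖ ^ p) / 2) ^ (q / p) := by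
  have h₂ := h ((u + v) / 2) ((u - v) / 2)
  rw [show (u + v) / 2 + (u - v) / 2 = u by ring,
    show (u + v) / 2 - (u - v) / 2 = v by ring] at h₂
  have h₃ := Real.rpow_le_rpow (by positivity) h₂ hq.le
  rwa [← Real.rpow_mul (by positivity), ← Real.rpow_mul (by positivity), one_div_mul_cancel hq.ne',
    Real.rpow_one, one_div_mul_eq_div] at h₃

lemma cubeNorm_rpow_le_of_twoPointIneq {p q : ℝ} {z : ℂ} (h2pt : TwoPointIneq p q z) (hp : 0 < p)
    (hpq : p ≤ q) {n : ℕ} (u v : (Fin n → Bool) → ℂ) (w : (Fin (n + 1) → Bool) → ℂ)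
    (hw : ∀ b y, w (Fin.cons b y) = (u y + v y) / 2 + sgn b * z * ((u y - v y) / 2)) :
    cubeNorm q w ^ p ≤ (cubeNorm q u ^ p + cubeNorm q v ^ p) / 2 := by
  have hq : 0 < q := hp.trans_le hpq
  have hr : 1 ≤ q / p := (one_le_div hp).mpr hpq
  set m : (Fin n → Bool) → ℝ :=
    (1 / 2 : ℝ) • (fun y => ‖u y‖ ^ p) + (1 / 2 : ℝ) • fun y => ‖v y‖ ^ p
  have hm : ∀ y, m y = (‖u y‖ ^ p + ‖v y‖ ^ p) / 2 := fun y => by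
    simp only [m, Pi.add_apply, Pi.smul_apply, smul_eq_mul]
    ring
  have hpointwise : cubeNorm q w ^ q ≤ cubeNorm (q / p) m ^ (q / p) := by
    rw [cubeNorm_rpow hq.ne', cubeNorm_rpow (by positivity), cubeMean_succ]
    refine cubeMean_mono fun y => ?_
    rw [hw, hw, Real.norm_of_nonneg (by rw [hm]; positivity), hm]
    simpa [sgn, ← sub_eq_add_neg] using h2pt.norm_rpow_add_le hq (u y) (v y)
  calc cubeNorm q w ^ p = (cubeNorm q w ^ q) ^ (p / q) := by
        rw [← Real.rpow_mul (cubeNorm_nonneg w), mul_div_cancel₀ _ hq.ne']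
    _ ≤ (cubeNorm (q / p) m ^ (q / p)) ^ (p / q) :=
        Real.rpow_le_rpow (Real.rpow_nonneg (cubeNorm_nonneg w) q) hpointwise (by positivity)
    _ = cubeNorm (q / p) m := by
        rw [← Real.rpow_mul (cubeNorm_nonneg m), div_mul_div_comm, mul_comm q p,
          div_self (by positivity), Real.rpow_one]
    _ ≤ (cubeNorm q u ^ p + cubeNorm q v ^ p) / 2 := by
        refine (cubeNorm_add_le hr _ _).trans_eq ?_
        rw [cubeNorm_smul (by positivity), cubeNorm_smul (by positivity),
          cubeNorm_norm_rpow (by positivity) hp, cubeNorm_norm_rpow (by positivity) hp,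
          mul_div_cancel₀ _ hp.ne']
        norm_num
        ring

section NoiseOperator

variable {n : ℕ}

def noiseKernel (z : ℂ) (x y : Fin n → Bool) : ℂ :=
  ∏ j, (1 + z * sgn (x j) * sgn (y j))

def noise (z : ℂ) (f : (Fin n → Bool) → ℂ) (x : Fin n → Bool) : ℂ :=
  cubeMean fun y => f y * noiseKernel z x y

lemma Tzk_zero_eq_noise (z : ℂ) (f : (Fin n → Bool) → ℂ) : Tzk z 0 f = noise z f := by
  have hfilter : ∀ S : Finset (Fin n), S.filter (fun j : Fin n => 0 ≤ (j : ℕ)) = S := fun S =>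
    Finset.filter_true_of_mem fun j _ => Nat.zero_le _
  ext x
  simp only [Tzk, walshCoeff, walsh, noise, noiseKernel, cubeMean, hfilter, Finset.prod_one_add,
    Finset.powerset_univ, Finset.mul_sum, Finset.sum_div, Finset.sum_mul]
  rw [Finset.sum_comm]
  refine Finset.sum_congr rfl fun S _ => Finset.sum_congr rfl fun y _ => ?_
  simp only [Finset.prod_mul_distrib, Finset.prod_const]
  ring

lemma noise_fin_zero (z : ℂ) (f : (Fin 0 → Bool) → ℂ) (x : Fin 0 → Bool) : noise z f x = f x := by
  simp [noise, noiseKernel, cubeMean_fin_zero _ x]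

lemma noiseKernel_cons (z : ℂ) (b c : Bool) (x y : Fin n → Bool) :
    noiseKernel z (Fin.cons b x) (Fin.cons c y) = (1 + z * sgn b * sgn c) * noiseKernel z x y := by
  simp [noiseKernel, Fin.prod_univ_succ]

lemma noise_cons (z : ℂ) (f : (Fin (n + 1) → Bool) → ℂ) (b : Bool) (x : Fin n → Bool) :
    noise z f (Fin.cons b x) =
      (noise z (fun y => f (Fin.cons true y)) x + noise z (fun y => f (Fin.cons false y)) x) / 2
      + sgn b * z * ((noise z (fun y => f (Fin.cons true y)) x
        - noise z (fun y => f (Fin.cons false y)) x) / 2) := by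
  have hsplit : ∀ y, (f (Fin.cons true y) * noiseKernel z (Fin.cons b x) (Fin.cons true y)
      + f (Fin.cons false y) * noiseKernel z (Fin.cons b x) (Fin.cons false y)) / 2
      = ((1 + sgn b * z) * (f (Fin.cons true y) * noiseKernel z x y)
        + (1 - sgn b * z) * (f (Fin.cons false y) * noiseKernel z x y)) / 2 := fun y => by
    simp only [noiseKernel_cons, sgn]
    push_cast
    ring
  rw [noise, cubeMean_succ]
  simp only [hsplit, cubeMean_add_div_two, cubeMean_const_mul, noise]
  ring

end NoiseOperator

theorem cubeNorm_noise_le {p q : ℝ} {z : ℂ} (h2pt : TwoPointIneq p q z) (hp : 0 < p)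
    (hpq : p ≤ q) : ∀ {n : ℕ} (f : (Fin n → Bool) → ℂ), cubeNorm q (noise z f) ≤ cubeNorm p f
  | 0, f => by
    rw [cubeNorm_fin_zero (hp.trans_le hpq).ne' _ default, cubeNorm_fin_zero hp.ne' _ default,
      noise_fin_zero]
  | n + 1, f => by
    rw [← Real.rpow_le_rpow_iff (cubeNorm_nonneg _) (cubeNorm_nonneg _) hp,
      cubeNorm_rpow_succ hp.ne' f]
    have ih := fun b => Real.rpow_le_rpow (cubeNorm_nonneg _)
      (cubeNorm_noise_le h2pt hp hpq fun y => f (Fin.cons b y)) hp.le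
    linarith [ih true, ih false,
      cubeNorm_rpow_le_of_twoPointIneq h2pt hp hpq _ _ _ (noise_cons z f)]

theorem stmt0_general (p q : ℝ) (z : ℂ) (hp : 1 ≤ p) (hpq : p ≤ q)
    (h2pt : TwoPointIneq p q z) (n : ℕ)
    (f : (Fin n → Bool) → ℂ) :
    ((∑ x : Fin n → Bool, ‖Tzk z 0 f x‖ ^ q) / 2 ^ n) ^ (1 / q)
      ≤ ((∑ x : Fin n → Bool, ‖f x‖ ^ p) / 2 ^ n) ^ (1 / p) := by
  change cubeNorm q (Tzk z 0 f) ≤ cubeNorm p f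
  rw [Tzk_zero_eq_noise]
  exact cubeNorm_noise_le h2pt (zero_lt_one.trans_le hp) hpq f

/-- complex hypercontractivity on the Hamming cube, assuming the
two-point inequality for `(p,q,z)`. -/
theorem stmt0 (p q : ℝ) (z : ℂ) (hp : 1 ≤ p) (hpq : p ≤ q)
    (h2pt : TwoPointIneq p q z) (n : ℕ) (hn : 1 ≤ n)
    (f : (Fin n → Bool) → ℂ) :
    ((∑ x : Fin n → Bool, ‖Tzk z 0 f x‖ ^ q) / 2 ^ n) ^ (1 / q)
      ≤ ((∑ x : Fin n → Bool, ‖f x‖ ^ p) / 2 ^ n) ^ (1 / p) :=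
  stmt0_general p q z hp hpq h2pt n f

end
end

section
/- Let 1 ≤ p ≤ q < ∞ and z ∈ ℂ, and suppose the two-point inequality holds for (p,q,z). Then for every n ≥ 1 and every f : {-1,1}^n → ℂ one has (𝔼 |T_z f|^q)^{p/q} ≤ 𝔼^1 (𝔼_{n-1} |T_z^1 f|^q)^{p/q}, where 𝔼 is the average over all of {-1,1}^n, 𝔼^1 is the average over the first coordinate, and 𝔼_{n-1} is the average over the last n−1 coordinates. -/
open MeasureTheory Finset

noncomputable section

/-! Split off the first coordinate and write `g₁, g₂` for `T_z^1 f` with first coordinate `1`,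
resp. `-1`. Since `T_z` multiplies the part of `T_z^1 f` that is odd in the first coordinate by `z`,
`T_z f = A ± z B` there, where `A ± B = g₁, g₂`. The two-point inequality, raised to the power `p`,
bounds `((|A + zB|^q + |A - zB|^q)/2)^{p/q}` pointwise by `(|g₁|^p + |g₂|^p)/2`; Minkowski's
inequality in `L^{q/p}` over the remaining `n - 1` coordinates then bounds the `L^{q/p}`-norm of
the latter by the average of `‖ |g₁|^p ‖_{q/p}` and `‖ |g₂|^p ‖_{q/p}`, which is the right-hand side. -/

@[simp] theorem sgn_true : sgn true = 1 := rfl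

@[simp] theorem sgn_false : sgn false = -1 := rfl

section FirstCoordinate

variable {m : ℕ}

theorem merge_one_eq_cons (a : Fin 1 → Bool) (b : Fin (m + 1 - 1) → Bool) :
    merge (m + 1) 1 a b = Fin.cons (a 0) b := by
  funext i
  refine Fin.cases ?_ (fun j => ?_) i <;> simp [merge]

theorem filter_one_le_eq_erase_zero (S : Finset (Fin (m + 1))) :
    S.filter (fun j : Fin (m + 1) => 1 ≤ (j : ℕ)) = S.erase 0 := by
  rw [← filter_ne']
  congr! 1 with j
  simp [Nat.one_le_iff_ne_zero]

theorem walsh_erase_zero_cons (S : Finset (Fin (m + 1))) (c c' : Bool) (b : Fin m → Bool) :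
    walsh (S.erase 0) (Fin.cons c b) = walsh (S.erase 0) (Fin.cons c' b) := by
  refine prod_congr rfl fun j hj => ?_
  obtain ⟨i, rfl⟩ := Fin.exists_succ_eq.2 (ne_of_mem_erase hj)
  simp

theorem walsh_cons (S : Finset (Fin (m + 1))) (c : Bool) (b : Fin m → Bool) :
    walsh S (Fin.cons c b) =
      (if 0 ∈ S then (sgn c : ℂ) else 1) * walsh (S.erase 0) (Fin.cons c b) := by
  split_ifs with h
  · rw [walsh, ← mul_prod_erase S _ h]
    simp [walsh]
  · rw [erase_eq_of_notMem h, one_mul]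

theorem Tzk_zero_cons (z : ℂ) (f : (Fin (m + 1) → Bool) → ℂ) (c : Bool) (b : Fin m → Bool) :
    Tzk z 0 f (Fin.cons c b) =
      (Tzk z 1 f (Fin.cons true b) + Tzk z 1 f (Fin.cons false b)) / 2
        + sgn c * z * ((Tzk z 1 f (Fin.cons true b) - Tzk z 1 f (Fin.cons false b)) / 2) := by
  simp only [Tzk, ← sum_add_distrib, ← sum_sub_distrib, sum_div, mul_sum]
  refine sum_congr rfl fun S _ => ?_
  rw [filter_one_le_eq_erase_zero, filter_true_of_mem fun j _ => Nat.zero_le _,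
    walsh_cons S c b, walsh_cons S true b, walsh_cons S false b, walsh_erase_zero_cons S c true b,
    walsh_erase_zero_cons S false true b]
  split_ifs with h
  · rw [← card_erase_add_one h, pow_succ]
    cases c <;> simp only [sgn_true, sgn_false] <;> push_cast <;> ring
  · rw [erase_eq_of_notMem h]
    ring

end FirstCoordinate

theorem Real.Lp_avg_le_of_nonneg {ι : Type*} [Fintype ι] {r : ℝ} (hr : 1 ≤ r) {N : ℝ} (hN : 0 < N)
    {u v : ι → ℝ} (hu : ∀ i, 0 ≤ u i) (hv : ∀ i, 0 ≤ v i) :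
    ((∑ i, ((u i + v i) / 2) ^ r) / N) ^ (1 / r)
      ≤ (((∑ i, u i ^ r) / N) ^ (1 / r) + ((∑ i, v i ^ r) / N) ^ (1 / r)) / 2 := by
  have hr0 : 0 < r := zero_lt_one.trans_le hr
  have hsum : ∀ w : ι → ℝ, (∀ i, 0 ≤ w i) → 0 ≤ ∑ i, w i ^ r := fun w hw =>
    sum_nonneg fun i _ => Real.rpow_nonneg (hw i) r
  have hmink := Real.Lp_add_le_of_nonneg (s := univ) hr (fun i _ => hu i) (fun i _ => hv i)
  have h2 : ((2 : ℝ) ^ r) ^ (1 / r) = 2 := by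
    rw [one_div, Real.rpow_rpow_inv zero_le_two hr0.ne']
  simp_rw [Real.div_rpow (add_nonneg (hu _) (hv _)) zero_le_two, ← sum_div]
  rw [Real.div_rpow (div_nonneg (hsum _ fun i => add_nonneg (hu i) (hv i)) (by positivity)) hN.le,
    Real.div_rpow (hsum _ fun i => add_nonneg (hu i) (hv i)) (by positivity), h2,
    Real.div_rpow (hsum u hu) hN.le, Real.div_rpow (hsum v hv) hN.le, div_div,
    div_le_iff₀ (by positivity)]
  calc _ ≤ _ := hmink
    _ = _ := by field_simp

section TwoPoint

variable {p q : ℝ} {z : ℂ}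

theorem TwoPointIneq.rpow_le (h : TwoPointIneq p q z) (hp : 0 < p) (a b : ℂ) :
    ((‖a + z * b‖ ^ q + ‖a - z * b‖ ^ q) / 2) ^ (p / q) ≤ (‖a + b‖ ^ p + ‖a - b‖ ^ p) / 2 := by
  have hX : 0 ≤ (‖a + z * b‖ ^ q + ‖a - z * b‖ ^ q) / 2 := by positivity
  have hY : 0 ≤ (‖a + b‖ ^ p + ‖a - b‖ ^ p) / 2 := by positivity
  have := Real.rpow_le_rpow (by positivity) (h a b) hp.le
  rwa [one_div p, Real.rpow_inv_rpow hY hp.ne', ← Real.rpow_mul hX, one_div_mul_eq_div] at this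

theorem TwoPointIneq.avg_rpow_le (h : TwoPointIneq p q z) (hp : 1 ≤ p) (hpq : p ≤ q)
    {ι : Type*} [Fintype ι] {N : ℝ} (hN : 0 < N) (g₁ g₂ : ι → ℂ) :
    ((∑ i, (‖(g₁ i + g₂ i) / 2 + z * ((g₁ i - g₂ i) / 2)‖ ^ q
          + ‖(g₁ i + g₂ i) / 2 - z * ((g₁ i - g₂ i) / 2)‖ ^ q)) / (2 * N)) ^ (p / q)
      ≤ (((∑ i, ‖g₁ i‖ ^ q) / N) ^ (p / q) + ((∑ i, ‖g₂ i‖ ^ q) / N) ^ (p / q)) / 2 := by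
  have hp0 : 0 < p := zero_lt_one.trans_le hp
  set r := q / p
  have hr : 1 ≤ r := (one_le_div hp0).2 hpq
  have hpr : p / q = 1 / r := (one_div_div q p).symm
  have hpow : ∀ w : ℂ, (‖w‖ ^ p) ^ r = ‖w‖ ^ q := fun w => by
    rw [← Real.rpow_mul (norm_nonneg w), mul_div_cancel₀ q hp0.ne']
  set c : ι → ℝ := fun i => ((‖(g₁ i + g₂ i) / 2 + z * ((g₁ i - g₂ i) / 2)‖ ^ q
          + ‖(g₁ i + g₂ i) / 2 - z * ((g₁ i - g₂ i) / 2)‖ ^ q) / 2)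
  have hc : ∀ i, 0 ≤ c i := fun i => by positivity
  have hpointwise : ∀ i, c i ^ (p / q) ≤ (‖g₁ i‖ ^ p + ‖g₂ i‖ ^ p) / 2 := fun i => by
    simpa [c, show (g₁ i + g₂ i) / 2 + (g₁ i - g₂ i) / 2 = g₁ i by ring,
      show (g₁ i + g₂ i) / 2 - (g₁ i - g₂ i) / 2 = g₂ i by ring]
      using h.rpow_le hp0 ((g₁ i + g₂ i) / 2) ((g₁ i - g₂ i) / 2)
  have hcr : ∀ i, (c i ^ (p / q)) ^ r = c i := fun i => by
    rw [← Real.rpow_mul (hc i), hpr, one_div_mul_cancel (by positivity), Real.rpow_one]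
  calc _ = ((∑ i, (c i ^ (p / q)) ^ r) / N) ^ (1 / r) := by
        rw [sum_congr rfl fun i _ => hcr i, hpr, ← sum_div, div_div]
    _ ≤ ((∑ i, ((‖g₁ i‖ ^ p + ‖g₂ i‖ ^ p) / 2) ^ r) / N) ^ (1 / r) := by
        gcongr with i
        exact hpointwise i
    _ ≤ _ := by
        simpa only [hpow, hpr] using Real.Lp_avg_le_of_nonneg hr hN
          (fun i => Real.rpow_nonneg (norm_nonneg (g₁ i)) p)
          (fun i => Real.rpow_nonneg (norm_nonneg (g₂ i)) p)

end TwoPoint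

/-- the one-step inequality
`(𝔼 |T_z f|^q)^{p/q} ≤ 𝔼^1 (𝔼_{n-1} |T_z^1 f|^q)^{p/q}`. -/
theorem stmt1 (p q : ℝ) (z : ℂ) (hp : 1 ≤ p) (hpq : p ≤ q)
    (h2pt : TwoPointIneq p q z) (n : ℕ) (hn : 1 ≤ n)
    (f : (Fin n → Bool) → ℂ) :
    ((∑ x : Fin n → Bool, ‖Tzk z 0 f x‖ ^ q) / 2 ^ n) ^ (p / q)
      ≤ (∑ a : Fin 1 → Bool,
          ((∑ b : Fin (n - 1) → Bool,
              ‖Tzk z 1 f (merge n 1 a b)‖ ^ q) / 2 ^ (n - 1)) ^ (p / q)) / 2 := by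
  obtain ⟨m, rfl⟩ : ∃ m, n = m + 1 := ⟨n - 1, by omega⟩
  have hsplit : ∑ x : Fin (m + 1) → Bool, ‖Tzk z 0 f x‖ ^ q
      = ∑ b : Fin m → Bool, (‖Tzk z 0 f (Fin.cons true b)‖ ^ q
          + ‖Tzk z 0 f (Fin.cons false b)‖ ^ q) := by
    rw [← (Fin.consEquiv fun _ => Bool).sum_comp, Fintype.sum_prod_type, Fintype.sum_bool,
      ← sum_add_distrib]
    rfl
  rw [← (Equiv.funUnique (Fin 1) Bool).symm.sum_comp, Fintype.sum_bool, hsplit, pow_succ']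
  simp only [merge_one_eq_cons, Equiv.funUnique_symm_apply, uniqueElim_const, Nat.add_sub_cancel]
  simp only [Tzk_zero_cons z f, sgn_true, sgn_false, Complex.ofReal_one, Complex.ofReal_neg,
    one_mul, neg_mul, ← sub_eq_add_neg]
  exact h2pt.avg_rpow_le hp hpq (by positivity)
    (fun b => Tzk z 1 f (Fin.cons true b)) (fun b => Tzk z 1 f (Fin.cons false b))

end
end

section
/- (Beckner's discrete monotonicity.) Let 1 ≤ p ≤ q < ∞ and z ∈ ℂ, and suppose the two-point inequality holds for (p,q,z). Then for every n ≥ 1 and every f : {-1,1}^n → ℂ, the map k ↦ 𝔼^k (𝔼_{n-k} |T_z^k f|^q)^{p/q} is nondecreasing for 0 ≤ k ≤ n, where 𝔼^k denotes the average over the first k coordinates and 𝔼_{n-k} the average over the last n−k coordinates, both with respect to the uniform measure on {-1,1}. -/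
open MeasureTheory Finset

noncomputable section

/-! Write `x = (a, ε, b)` with `ε` the coordinate `k + 1`. Then `T_z^k f (a, ±1, b) = E ± z D`,
where `E` and `D` are half the sum and half the difference of `c = T_z^{k+1} f (a, 1, b)` and
`d = T_z^{k+1} f (a, -1, b)`. The two-point inequality bounds the `q`-average of `|T_z^k f|`
over `ε` by the `p`-average of `|c|, |d|`, and Minkowski's inequality in `L^{q/p}` over `b`
moves that `p`-average outside the inner norm, so each step `k → k + 1` can only increase the
functional. -/

lemma rpow_mean_midpoint_le {ι : Type*} (s : Finset ι) {r D : ℝ} (hr : 1 ≤ r) (hD : 0 < D)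
    {u v : ι → ℝ} (hu : ∀ i ∈ s, 0 ≤ u i) (hv : ∀ i ∈ s, 0 ≤ v i) :
    ((∑ i ∈ s, ((u i + v i) / 2) ^ r) / D) ^ (1 / r)
      ≤ (((∑ i ∈ s, u i ^ r) / D) ^ (1 / r) + ((∑ i ∈ s, v i ^ r) / D) ^ (1 / r)) / 2 := by
  have hsum : ∀ w : ι → ℝ, (∀ i ∈ s, 0 ≤ w i) → 0 ≤ ∑ i ∈ s, w i ^ r :=
    fun w hw => sum_nonneg fun i hi => Real.rpow_nonneg (hw i hi) r
  have half : ∀ w : ι → ℝ, (∀ i ∈ s, 0 ≤ w i) →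
      (∑ i ∈ s, (w i / 2) ^ r) ^ (1 / r) = (∑ i ∈ s, w i ^ r) ^ (1 / r) / 2 := by
    intro w hw
    rw [sum_congr rfl fun i hi => Real.div_rpow (hw i hi) zero_le_two r, ← sum_div,
      Real.div_rpow (hsum w hw) (by positivity), one_div,
      Real.rpow_rpow_inv zero_le_two (by positivity)]
  calc ((∑ i ∈ s, ((u i + v i) / 2) ^ r) / D) ^ (1 / r)
      = (∑ i ∈ s, (u i / 2 + v i / 2) ^ r) ^ (1 / r) / D ^ (1 / r) := by
        simp only [add_div _ _ (2 : ℝ)]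
        exact Real.div_rpow (hsum _ fun i hi => by have := hu i hi; have := hv i hi; positivity)
          hD.le _
    _ ≤ ((∑ i ∈ s, (u i / 2) ^ r) ^ (1 / r) + (∑ i ∈ s, (v i / 2) ^ r) ^ (1 / r))
          / D ^ (1 / r) := by
        gcongr
        exact Real.Lp_add_le_of_nonneg s hr (fun i hi => by have := hu i hi; positivity)
          (fun i hi => by have := hv i hi; positivity)
    _ = _ := by
        rw [half u hu, half v hv, Real.div_rpow (hsum u hu) hD.le, Real.div_rpow (hsum v hv) hD.le]
        ring

lemma TwoPointIneq.rpow_mean_le {p q : ℝ} {z : ℂ} (h : TwoPointIneq p q z)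
    (hq : 0 < q) (c d : ℂ) :
    (‖(c + d) / 2 + z * ((c - d) / 2)‖ ^ q + ‖(c + d) / 2 - z * ((c - d) / 2)‖ ^ q) / 2
      ≤ ((‖c‖ ^ p + ‖d‖ ^ p) / 2) ^ (q / p) := by
  have h2 := h ((c + d) / 2) ((c - d) / 2)
  rwa [show (c + d) / 2 + (c - d) / 2 = c by ring, show (c + d) / 2 - (c - d) / 2 = d by ring,
    one_div, Real.rpow_inv_le_iff_of_pos (by positivity) (by positivity) hq,
    ← Real.rpow_mul (by positivity), one_div_mul_eq_div] at h2

lemma walsh_update_of_notMem {n : ℕ} {S : Finset (Fin n)} {i : Fin n} (hi : i ∉ S)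
    (x : Fin n → Bool) (ε : Bool) : walsh S (Function.update x i ε) = walsh S x :=
  prod_congr rfl fun j hj => by rw [Function.update_of_ne (ne_of_mem_of_not_mem hj hi)]

lemma walsh_update_of_mem {n : ℕ} {S : Finset (Fin n)} {i : Fin n} (hi : i ∈ S)
    (x : Fin n → Bool) (ε : Bool) :
    walsh S (Function.update x i ε) = sgn ε * walsh (S.erase i) x := by
  rw [walsh, ← mul_prod_erase S _ hi, Function.update_self]
  congr 1
  exact prod_congr rfl fun j hj => by rw [Function.update_of_ne (ne_of_mem_erase hj)]

lemma card_filter_le_eq {n : ℕ} (i : Fin n) (S : Finset (Fin n)) :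
    #(S.filter fun j : Fin n => (i : ℕ) ≤ j)
      = #(S.filter fun j : Fin n => (i : ℕ) + 1 ≤ j) + if i ∈ S then 1 else 0 := by
  split_ifs with hiS
  · have hins : S.filter (fun j : Fin n => (i : ℕ) ≤ j)
        = insert i (S.filter fun j : Fin n => (i : ℕ) + 1 ≤ j) := by
      ext j
      simp only [mem_filter, mem_insert, Fin.ext_iff]
      constructor
      · rintro ⟨hj, hij⟩
        rcases hij.eq_or_lt with h | h
        exacts [Or.inl h.symm, Or.inr ⟨hj, h⟩]
      · rintro (hj | ⟨hj, hij⟩)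
        · exact ⟨Fin.ext hj ▸ hiS, hj.ge⟩
        · exact ⟨hj, by omega⟩
    rw [hins, card_insert_of_notMem (by simp)]
  · rw [add_zero]
    refine congrArg card (filter_congr fun j hj => ?_)
    have : (j : ℕ) ≠ i := fun h => hiS (Fin.ext h ▸ hj)
    omega

lemma Tzk_update {n : ℕ} (i : Fin n) (z : ℂ) (f : (Fin n → Bool) → ℂ) (x : Fin n → Bool)
    (ε : Bool) :
    Tzk z i f (Function.update x i ε)
      = (Tzk z (i + 1) f (Function.update x i true)
          + Tzk z (i + 1) f (Function.update x i false)) / 2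
        + sgn ε * z * ((Tzk z (i + 1) f (Function.update x i true)
          - Tzk z (i + 1) f (Function.update x i false)) / 2) := by
  simp only [Tzk, ← sum_add_distrib, ← sum_sub_distrib, sum_div, mul_sum]
  refine sum_congr rfl fun S _ => ?_
  rw [card_filter_le_eq i S]
  by_cases hS : i ∈ S
  · simp only [walsh_update_of_mem hS, if_pos hS, sgn]
    cases ε <;> push_cast <;> ring
  · simp only [walsh_update_of_notMem hS, if_neg hS]
    ring

def consHigh (n k : ℕ) (hk : k < n) :
    Bool × (Fin (n - (k + 1)) → Bool) ≃ (Fin (n - k) → Bool) :=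
  (Fin.consEquiv fun _ => Bool).trans (Equiv.arrowCongr (finCongr (by omega)) (Equiv.refl Bool))

lemma merge_consHigh {n k : ℕ} (hk : k < n) (a : Fin k → Bool) (ε : Bool)
    (b : Fin (n - (k + 1)) → Bool) :
    merge n k a (consHigh n k hk (ε, b))
      = merge n (k + 1) (Fin.snoc a ε : Fin (k + 1) → Bool) b := by
  funext i
  rcases lt_trichotomy (i : ℕ) k with h | h | h
  · simp [merge, h, Nat.lt_succ_of_lt h, Fin.snoc]
  · simp [merge, h, consHigh, Fin.snoc]
  · have h' : ¬ (i : ℕ) < k + 1 := by omega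
    simp only [merge, h', not_lt.mpr h.le, ↓reduceDIte, consHigh, Equiv.trans_apply,
      Equiv.arrowCongr_apply, Equiv.coe_refl, finCongr_symm, Function.comp_apply, finCongr_apply,
      Fin.cast_mk, Fin.consEquiv_apply, id_eq]
    convert Fin.cons_succ (α := fun _ => Bool) ε b ⟨i - (k + 1), by omega⟩ using 2
    ext
    simp only [Fin.val_succ]
    omega

lemma update_merge_snoc {n k : ℕ} (hk : k < n) (a : Fin k → Bool) (ε ε' : Bool)
    (b : Fin (n - (k + 1)) → Bool) :
    Function.update (merge n (k + 1) (Fin.snoc a ε : Fin (k + 1) → Bool) b) ⟨k, hk⟩ ε'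
      = merge n (k + 1) (Fin.snoc a ε' : Fin (k + 1) → Bool) b := by
  funext i
  rcases eq_or_ne i ⟨k, hk⟩ with rfl | hi
  · simp [merge, Fin.snoc]
  · have : (i : ℕ) ≠ k := fun h => hi (Fin.ext h)
    simp only [Function.update_of_ne hi, merge, Fin.snoc]
    split_ifs <;> first | rfl | omega

lemma Tzk_merge_snoc {n k : ℕ} (hk : k < n) (z : ℂ) (f : (Fin n → Bool) → ℂ)
    (a : Fin k → Bool) (ε : Bool) (b : Fin (n - (k + 1)) → Bool) :
    let c := Tzk z (k + 1) f (merge n (k + 1) (Fin.snoc a true : Fin (k + 1) → Bool) b)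
    let d := Tzk z (k + 1) f (merge n (k + 1) (Fin.snoc a false : Fin (k + 1) → Bool) b)
    Tzk z k f (merge n (k + 1) (Fin.snoc a ε : Fin (k + 1) → Bool) b)
      = (c + d) / 2 + sgn ε * z * ((c - d) / 2) := by
  have := Tzk_update ⟨k, hk⟩ z f (merge n (k + 1) (Fin.snoc a true : Fin (k + 1) → Bool) b) ε
  simp only [update_merge_snoc] at this
  exact this

lemma norm_Tzk_merge_snoc_rpow_add_le {p q : ℝ} {z : ℂ} (hq : 0 < q)
    (h2pt : TwoPointIneq p q z) {n k : ℕ} (hk : k < n) (f : (Fin n → Bool) → ℂ)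
    (a : Fin k → Bool) (b : Fin (n - (k + 1)) → Bool) :
    let x (ε : Bool) := merge n (k + 1) (Fin.snoc a ε : Fin (k + 1) → Bool) b
    ‖Tzk z k f (x true)‖ ^ q + ‖Tzk z k f (x false)‖ ^ q
      ≤ 2 * ((‖Tzk z (k + 1) f (x true)‖ ^ p + ‖Tzk z (k + 1) f (x false)‖ ^ p) / 2)
          ^ (q / p) := by
  intro x
  have := h2pt.rpow_mean_le hq (Tzk z (k + 1) f (x true)) (Tzk z (k + 1) f (x false))
  rw [Tzk_merge_snoc hk, Tzk_merge_snoc hk]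
  simp only [sgn, if_true, Bool.false_eq_true, if_false, Complex.ofReal_one, Complex.ofReal_neg,
    one_mul, neg_mul, ← sub_eq_add_neg]
  simp only [x] at this ⊢
  linarith

-- `mixedNormPow p q k g = 𝔼^k (𝔼_{n-k} |g|^q)^{p/q}`; `innerMean q k g a` is the inner average.
def innerMean (q : ℝ) {n : ℕ} (k : ℕ) (g : (Fin n → Bool) → ℂ) (a : Fin k → Bool) :
    ℝ :=
  (∑ b : Fin (n - k) → Bool, ‖g (merge n k a b)‖ ^ q) / 2 ^ (n - k)

def mixedNormPow (p q : ℝ) {n : ℕ} (k : ℕ) (g : (Fin n → Bool) → ℂ) : ℝ :=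
  (∑ a : Fin k → Bool, innerMean q k g a ^ (p / q)) / 2 ^ k

lemma innerMean_Tzk_rpow_le {p q : ℝ} {z : ℂ} (hp : 0 < p) (hpq : p ≤ q)
    (h2pt : TwoPointIneq p q z) {n k : ℕ} (hk : k < n) (f : (Fin n → Bool) → ℂ)
    (a : Fin k → Bool) :
    innerMean q k (Tzk z k f) a ^ (p / q)
      ≤ (innerMean q (k + 1) (Tzk z (k + 1) f) (Fin.snoc a true) ^ (p / q)
        + innerMean q (k + 1) (Tzk z (k + 1) f) (Fin.snoc a false) ^ (p / q)) / 2 := by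
  have hq : 0 < q := hp.trans_le hpq
  have hr : 1 ≤ q / p := (one_le_div hp).mpr hpq
  set D : ℝ := 2 ^ (n - (k + 1))
  set u : Bool → (Fin (n - (k + 1)) → Bool) → ℝ := fun ε b =>
    ‖Tzk z (k + 1) f (merge n (k + 1) (Fin.snoc a ε : Fin (k + 1) → Bool) b)‖ ^ p with hu
  have hu_rpow : ∀ ε, innerMean q (k + 1) (Tzk z (k + 1) f) (Fin.snoc a ε)
      = (∑ b, u ε b ^ (q / p)) / D := fun ε => by
    simp only [innerMean, hu, ← Real.rpow_mul (norm_nonneg _), mul_div_cancel₀ _ hp.ne']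
    rfl
  have hinner :
      innerMean q k (Tzk z k f) a ≤ (∑ b, ((u true b + u false b) / 2) ^ (q / p)) / D := by
    have h2 : (2 : ℝ) ^ (n - k) = 2 * D := by
      rw [← pow_succ']; congr 1; omega
    rw [innerMean, h2, ← div_div, div_le_div_iff_of_pos_right (by positivity),
      div_le_iff₀ two_pos, ← (consHigh n k hk).sum_comp, Fintype.sum_prod_type_right, sum_mul]
    gcongr with b
    simpa only [Fintype.sum_bool, merge_consHigh, mul_comm _ (2 : ℝ)]
      using norm_Tzk_merge_snoc_rpow_add_le hq h2pt hk f a b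
  calc innerMean q k (Tzk z k f) a ^ (p / q)
      ≤ ((∑ b, ((u true b + u false b) / 2) ^ (q / p)) / D) ^ (1 / (q / p)) := by
        rw [one_div_div]
        exact Real.rpow_le_rpow
          (div_nonneg (sum_nonneg fun b _ => by positivity) (by positivity)) hinner (by positivity)
    _ ≤ _ := by
        rw [hu_rpow, hu_rpow, ← one_div_div q p]
        exact rpow_mean_midpoint_le univ hr (by positivity) (fun b _ => by positivity)
          (fun b _ => by positivity)

lemma mixedNormPow_Tzk_le_succ {p q : ℝ} {z : ℂ} (hp : 0 < p) (hpq : p ≤ q)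
    (h2pt : TwoPointIneq p q z) {n k : ℕ} (hk : k < n) (f : (Fin n → Bool) → ℂ) :
    mixedNormPow p q k (Tzk z k f) ≤ mixedNormPow p q (k + 1) (Tzk z (k + 1) f) := by
  rw [mixedNormPow, mixedNormPow, ← (Fin.snocEquiv fun _ => Bool).sum_comp,
    Fintype.sum_prod_type_right, pow_succ, mul_comm, ← div_div,
    div_le_div_iff_of_pos_right (by positivity), sum_div]
  gcongr with a
  rw [Fintype.sum_bool]
  exact innerMean_Tzk_rpow_le hp hpq h2pt hk f a

lemma monotoneOn_mixedNormPow_Tzk {p q : ℝ} {z : ℂ} (hp : 0 < p) (hpq : p ≤ q)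
    (h2pt : TwoPointIneq p q z) {n : ℕ} (f : (Fin n → Bool) → ℂ) :
    MonotoneOn (fun k => mixedNormPow p q k (Tzk z k f)) (Set.Iic n) :=
  monotoneOn_of_le_succ Set.ordConnected_Iic fun _ _ _ hk =>
    mixedNormPow_Tzk_le_succ hp hpq h2pt (Order.succ_le_iff.mp hk) f

theorem stmt2_general (p q : ℝ) (z : ℂ) (hp : 1 ≤ p) (hpq : p ≤ q)
    (h2pt : TwoPointIneq p q z) (n : ℕ)
    (f : (Fin n → Bool) → ℂ) (k₁ k₂ : ℕ) (hk : k₁ ≤ k₂) (hk₂ : k₂ ≤ n) :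
    (∑ a : Fin k₁ → Bool,
        ((∑ b : Fin (n - k₁) → Bool,
            ‖Tzk z k₁ f (merge n k₁ a b)‖ ^ q) / 2 ^ (n - k₁)) ^ (p / q)) / 2 ^ k₁
      ≤ (∑ a : Fin k₂ → Bool,
          ((∑ b : Fin (n - k₂) → Bool,
              ‖Tzk z k₂ f (merge n k₂ a b)‖ ^ q) / 2 ^ (n - k₂)) ^ (p / q)) / 2 ^ k₂ :=
  monotoneOn_mixedNormPow_Tzk (by linarith) hpq h2pt f (hk.trans hk₂) hk₂ hk

/-- Beckner's discrete monotonicity: the map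
`k ↦ 𝔼^k (𝔼_{n-k} |T_z^k f|^q)^{p/q}` is nondecreasing in `k`. -/
theorem stmt2 (p q : ℝ) (z : ℂ) (hp : 1 ≤ p) (hpq : p ≤ q)
    (h2pt : TwoPointIneq p q z) (n : ℕ) (hn : 1 ≤ n)
    (f : (Fin n → Bool) → ℂ) (k₁ k₂ : ℕ) (hk : k₁ ≤ k₂) (hk₂ : k₂ ≤ n) :
    (∑ a : Fin k₁ → Bool,
        ((∑ b : Fin (n - k₁) → Bool,
            ‖Tzk z k₁ f (merge n k₁ a b)‖ ^ q) / 2 ^ (n - k₁)) ^ (p / q)) / 2 ^ k₁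
      ≤ (∑ a : Fin k₂ → Bool,
          ((∑ b : Fin (n - k₂) → Bool,
              ‖Tzk z k₂ f (merge n k₂ a b)‖ ^ q) / 2 ^ (n - k₂)) ^ (p / q)) / 2 ^ k₂ :=
  stmt2_general p q z hp hpq h2pt n f k₁ k₂ hk hk₂

end
end

section
/- Let g(x) = Σ_{ℓ=0}^{N} a_ℓ x^ℓ be a polynomial with complex coefficients, let s ∈ [0,1], let z ∈ ℂ, and let w ∈ ℂ with w² = s + (1-s)z² and w ≠ 0. Then for all real u and x, ∫_ℝ ∫_ℝ g( z(x+iy)√(1-s) + (u+iv)√s ) dγ(y) dγ(v) = Σ_{ℓ=0}^{N} a_ℓ w^ℓ H_ℓ( (u√s + z x √(1-s)) / w ). -/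
open MeasureTheory Finset

noncomputable section

/-!
Put `A = u√s + z x √(1-s)`, `α = i z √(1-s)` and `β = i √s`. The integrand is then
`g(A + β v + α y)`, and `α² + β² = -(s + (1-s) z²) = (i w)²`. For real coefficients, stability of
Gaussians says that `α Y + β V` has the law of `√(α² + β²) T`. For complex coefficients this still
holds at the level of moments: `∑_j C(m,j) α^j β^(m-j) 𝔼Y^j 𝔼V^(m-j) = W^m 𝔼T^m` whenever
`W² = α² + β²`, since the odd moments vanish and the even ones are `(2k)!/(2^k k!)`. Hence the
double average of `(A + β v + α y)^ℓ` is `𝔼(A + i w T)^ℓ = w^ℓ 𝔼(A/w + i T)^ℓ = w^ℓ H_ℓ(A/w)`.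
-/

open ProbabilityTheory

instance : IsProbabilityMeasure γ := by unfold γ; infer_instance

lemma gaussianPDFReal_zero_one (x : ℝ) :
    gaussianPDFReal 0 1 x = (Real.sqrt (2 * Real.pi))⁻¹ * Real.exp (-x ^ 2 / 2) := by
  simp [gaussianPDFReal]

lemma hasDerivAt_gaussianPDFReal_zero_one (x : ℝ) :
    HasDerivAt (gaussianPDFReal 0 1) (-x * gaussianPDFReal 0 1 x) x := by
  have h : HasDerivAt (fun x : ℝ => -x ^ 2 / 2) (-x) x :=
    ((hasDerivAt_pow 2 x).neg.div_const 2).congr_deriv (by push_cast; ring)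
  rw [show gaussianPDFReal 0 1 = _ from funext gaussianPDFReal_zero_one]
  exact (h.exp.const_mul _).congr_deriv (by ring)

lemma integrable_pow_mul_gaussianPDFReal (m : ℕ) :
    Integrable (fun x : ℝ => x ^ m * gaussianPDFReal 0 1 x) := by
  have h := integrable_rpow_mul_exp_neg_mul_sq (b := 1 / 2) (by norm_num) (s := m)
    (by linarith [(Nat.cast_nonneg m : (0 : ℝ) ≤ m)])
  refine (h.const_mul (Real.sqrt (2 * Real.pi))⁻¹).congr (ae_of_all _ fun x => ?_)
  simp only [gaussianPDFReal_zero_one, Real.rpow_natCast]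
  ring_nf

lemma integral_pow_add_two_gaussian (m : ℕ) :
    ∫ x, x ^ (m + 2) ∂γ = (m + 1) * ∫ x, x ^ m ∂γ := by
  simp only [γ, integral_gaussianReal_eq_integral_smul one_ne_zero, smul_eq_mul]
  have hderiv (x : ℝ) : HasDerivAt (fun x => x ^ (m + 1) * gaussianPDFReal 0 1 x)
      ((m + 1) * (x ^ m * gaussianPDFReal 0 1 x) - x ^ (m + 2) * gaussianPDFReal 0 1 x) x :=
    ((hasDerivAt_pow (m + 1) x).mul (hasDerivAt_gaussianPDFReal_zero_one x)).congr_deriv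
      (by push_cast; ring)
  have hparts := integral_eq_zero_of_hasDerivAt_of_integrable hderiv
    (((integrable_pow_mul_gaussianPDFReal m).const_mul _).sub
      (integrable_pow_mul_gaussianPDFReal (m + 2)))
    (integrable_pow_mul_gaussianPDFReal (m + 1))
  rw [integral_sub ((integrable_pow_mul_gaussianPDFReal m).const_mul _)
    (integrable_pow_mul_gaussianPDFReal (m + 2)), integral_const_mul] at hparts
  simp only [mul_comm (gaussianPDFReal 0 1 _)]
  linarith

def gaussMoment (m : ℕ) : ℂ := ∫ x : ℝ, (x : ℂ) ^ m ∂γ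

lemma integrable_ofReal_pow (m : ℕ) : Integrable (fun x : ℝ => (x : ℂ) ^ m) γ :=
  (memLp_id_gaussianReal (μ := 0) (v := 1) m).integrable_norm_pow'.mono' (by fun_prop)
    (ae_of_all _ fun x => by simp)

lemma gaussMoment_eq_ofReal (m : ℕ) : gaussMoment m = ((∫ x, x ^ m ∂γ : ℝ) : ℂ) := by
  rw [gaussMoment, ← integral_complex_ofReal]; push_cast; rfl

lemma gaussMoment_zero : gaussMoment 0 = 1 := by simp [gaussMoment]

lemma gaussMoment_one : gaussMoment 1 = 0 := by
  simp [gaussMoment_eq_ofReal, γ, integral_id_gaussianReal]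

lemma gaussMoment_add_two (m : ℕ) : gaussMoment (m + 2) = (m + 1) * gaussMoment m := by
  rw [gaussMoment_eq_ofReal, gaussMoment_eq_ofReal, integral_pow_add_two_gaussian]; push_cast; rfl

lemma gaussMoment_of_odd {m : ℕ} (hm : Odd m) : gaussMoment m = 0 := by
  obtain ⟨k, rfl⟩ := hm
  induction k with
  | zero => simpa using gaussMoment_one
  | succ k ih =>
    rw [show 2 * (k + 1) + 1 = 2 * k + 1 + 2 by ring, gaussMoment_add_two, ih, mul_zero]

lemma gaussMoment_two_mul (k : ℕ) :
    gaussMoment (2 * k) = (2 * k).factorial / (2 ^ k * k.factorial) := by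
  induction k with
  | zero => simp [gaussMoment_zero]
  | succ k ih =>
    rw [show 2 * (k + 1) = 2 * k + 2 by ring, gaussMoment_add_two, ih,
      show 2 * k + 2 = 2 * k + 1 + 1 by ring, Nat.factorial_succ, Nat.factorial_succ,
      Nat.factorial_succ]
    push_cast
    field_simp [Nat.factorial_ne_zero]
    ring

lemma choose_mul_gaussMoment_mul_gaussMoment (a b : ℕ) :
    ((2 * a + 2 * b).choose (2 * a) : ℂ) * gaussMoment (2 * a) * gaussMoment (2 * b)
      = ((a + b).choose a : ℂ) * gaussMoment (2 * a + 2 * b) := by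
  rw [Nat.cast_choose ℂ (by omega : 2 * a ≤ 2 * a + 2 * b),
    Nat.cast_choose ℂ (by omega : a ≤ a + b),
    show 2 * a + 2 * b - 2 * a = 2 * b by omega, show a + b - a = b by omega,
    show 2 * a + 2 * b = 2 * (a + b) by ring, gaussMoment_two_mul, gaussMoment_two_mul,
    gaussMoment_two_mul]
  field_simp [Nat.factorial_ne_zero]
  ring

lemma Finset.sum_range_two_mul_add_one_of_odd {M : Type*} [AddCommMonoid M] (f : ℕ → M)
    (hf : ∀ j, Odd j → f j = 0) (k : ℕ) :
    ∑ j ∈ range (2 * k + 1), f j = ∑ i ∈ range (k + 1), f (2 * i) := by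
  induction k with
  | zero => simp
  | succ k ih =>
    rw [show 2 * (k + 1) + 1 = 2 * k + 1 + 1 + 1 by ring, sum_range_succ, sum_range_succ, ih,
      hf _ ⟨k, rfl⟩, add_zero, sum_range_succ (fun i => f (2 * i)) (k + 1), mul_add_one]

lemma sum_choose_mul_gaussMoment_mul_gaussMoment (m : ℕ) {α β W : ℂ} (hW : W ^ 2 = α ^ 2 + β ^ 2) :
    ∑ j ∈ range (m + 1),
        (m.choose j : ℂ) * α ^ j * β ^ (m - j) * gaussMoment j * gaussMoment (m - j)
      = W ^ m * gaussMoment m := by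
  obtain ⟨k, rfl | rfl⟩ := Nat.even_or_odd' m
  · rw [sum_range_two_mul_add_one_of_odd _ (fun j hj => by rw [gaussMoment_of_odd hj]; ring)]
    have hterm (i : ℕ) (hi : i ∈ range (k + 1)) :
        ((2 * k).choose (2 * i) : ℂ) * α ^ (2 * i) * β ^ (2 * k - 2 * i) * gaussMoment (2 * i)
          * gaussMoment (2 * k - 2 * i)
          = gaussMoment (2 * k) * ((α ^ 2) ^ i * (β ^ 2) ^ (k - i) * (k.choose i : ℂ)) := by
      obtain ⟨b, rfl⟩ := Nat.exists_eq_add_of_le (mem_range_succ_iff.mp hi)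
      rw [show 2 * (i + b) - 2 * i = 2 * b by omega, show i + b - i = b by omega, ← pow_mul,
        ← pow_mul, mul_add]
      linear_combination (α ^ (2 * i) * β ^ (2 * b)) * choose_mul_gaussMoment_mul_gaussMoment i b
    rw [sum_congr rfl hterm, ← mul_sum, ← add_pow, ← hW, ← pow_mul]
    ring
  · rw [gaussMoment_of_odd (odd_two_mul_add_one k), mul_zero]
    refine sum_eq_zero fun j hj => ?_
    rcases Nat.even_or_odd j with hj' | hj'
    · have hodd := Nat.Odd.sub_even (mem_range_succ_iff.mp hj) (odd_two_mul_add_one k) hj'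
      rw [gaussMoment_of_odd hodd, mul_zero]
    · rw [gaussMoment_of_odd hj', mul_zero, zero_mul]

lemma add_mul_pow_eq_sum (c d t : ℂ) (m : ℕ) :
    (c + d * t) ^ m = ∑ j ∈ range (m + 1), (m.choose j * c ^ (m - j) * d ^ j : ℂ) * t ^ j := by
  rw [add_comm, add_pow]
  exact sum_congr rfl fun j _ => by ring

lemma integrable_add_mul_pow (c d : ℂ) (m : ℕ) : Integrable (fun t : ℝ => (c + d * t) ^ m) γ := by
  simp_rw [add_mul_pow_eq_sum]
  exact integrable_finsetSum _ fun j _ => (integrable_ofReal_pow j).const_mul _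

lemma integral_add_mul_pow (c d : ℂ) (m : ℕ) :
    ∫ t : ℝ, (c + d * t) ^ m ∂γ
      = ∑ j ∈ range (m + 1), (m.choose j : ℂ) * c ^ (m - j) * d ^ j * gaussMoment j := by
  simp_rw [add_mul_pow_eq_sum]
  rw [integral_finsetSum _ fun j _ => (integrable_ofReal_pow j).const_mul _]
  simp_rw [integral_const_mul]
  rfl

lemma integrable_integral_add_add_mul_pow (c α β : ℂ) (m : ℕ) :
    Integrable (fun v : ℝ => ∫ y : ℝ, (c + β * v + α * y) ^ m ∂γ) γ := by
  simp_rw [integral_add_mul_pow]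
  exact integrable_finsetSum _ fun j _ =>
    (((integrable_add_mul_pow c β _).const_mul _).mul_const _).mul_const _

lemma integral_integral_mul_add_mul_pow {α β W : ℂ} (hW : W ^ 2 = α ^ 2 + β ^ 2) (m : ℕ) :
    ∫ v : ℝ, ∫ y : ℝ, (β * v + α * y) ^ m ∂γ ∂γ = W ^ m * gaussMoment m := by
  calc ∫ v : ℝ, ∫ y : ℝ, (β * v + α * y) ^ m ∂γ ∂γ
      = ∫ v : ℝ, ∑ j ∈ range (m + 1),
          ((m.choose j : ℂ) * α ^ j * β ^ (m - j) * gaussMoment j) * (v : ℂ) ^ (m - j) ∂γ := by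
        refine integral_congr_ae (ae_of_all _ fun v => ?_)
        simp only [integral_add_mul_pow, mul_pow]
        exact sum_congr rfl fun j _ => by ring
    _ = W ^ m * gaussMoment m := by
        rw [integral_finsetSum _ fun j _ => (integrable_ofReal_pow _).const_mul _]
        simp_rw [integral_const_mul]
        exact sum_choose_mul_gaussMoment_mul_gaussMoment m hW

lemma integral_integral_add_add_mul_pow {α β W : ℂ} (hW : W ^ 2 = α ^ 2 + β ^ 2) (c : ℂ) (m : ℕ) :
    ∫ v : ℝ, ∫ y : ℝ, (c + β * v + α * y) ^ m ∂γ ∂γ = ∫ t : ℝ, (c + W * t) ^ m ∂γ := by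
  have hinner (v : ℝ) : ∫ y : ℝ, (c + β * v + α * y) ^ m ∂γ
      = ∑ k ∈ range (m + 1), (m.choose k : ℂ) * c ^ (m - k) * ∫ y : ℝ, (β * v + α * y) ^ k ∂γ := by
    have hexpand (y : ℝ) : (c + β * v + α * y) ^ m
        = ∑ k ∈ range (m + 1), (β * v + α * y) ^ k * c ^ (m - k) * (m.choose k : ℂ) := by
      rw [add_assoc, add_comm, add_pow]
    simp_rw [hexpand]
    rw [integral_finsetSum _ fun k _ => ((integrable_add_mul_pow _ _ k).mul_const _).mul_const _]
    simp_rw [integral_mul_const]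
    exact sum_congr rfl fun k _ => by ring
  have hint (k : ℕ) : Integrable (fun v : ℝ => ∫ y : ℝ, (β * v + α * y) ^ k ∂γ) γ := by
    simpa using integrable_integral_add_add_mul_pow 0 α β k
  simp_rw [hinner]
  rw [integral_finsetSum _ fun k _ => (hint k).const_mul _, integral_add_mul_pow]
  simp_rw [integral_const_mul, integral_integral_mul_add_mul_pow hW]
  exact sum_congr rfl fun k _ => by ring

lemma integral_integral_sum_mul_add_add_mul_pow {α β W : ℂ} (hW : W ^ 2 = α ^ 2 + β ^ 2) (c : ℂ)
    (S : Finset ℕ) (a : ℕ → ℂ) :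
    ∫ v : ℝ, ∫ y : ℝ, ∑ ℓ ∈ S, a ℓ * (c + β * v + α * y) ^ ℓ ∂γ ∂γ
      = ∑ ℓ ∈ S, a ℓ * ∫ t : ℝ, (c + W * t) ^ ℓ ∂γ := by
  simp_rw [integral_finsetSum _ fun ℓ _ => (integrable_add_mul_pow _ α ℓ).const_mul (a ℓ),
    integral_const_mul]
  rw [integral_finsetSum _ fun ℓ _ => (integrable_integral_add_add_mul_pow c α β ℓ).const_mul (a ℓ)]
  simp_rw [integral_const_mul, integral_integral_add_add_mul_pow hW]

lemma integral_add_I_mul_pow (c : ℂ) {w : ℂ} (hw : w ≠ 0) (m : ℕ) :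
    ∫ t : ℝ, (c + Complex.I * w * t) ^ m ∂γ = w ^ m * Hpoly m (c / w) := by
  rw [Hpoly, ← integral_const_mul]
  refine integral_congr_ae (ae_of_all _ fun t => ?_)
  simp only [← mul_pow]
  congr 1
  field_simp

/-- the double Gaussian average of the polynomial `g` equals the
Mehler semigroup applied to the Hermite-expanded polynomial. -/
theorem stmt10 (N : ℕ) (a : ℕ → ℂ) (s : ℝ) (hs0 : 0 ≤ s) (hs1 : s ≤ 1)
    (z w : ℂ) (hw : w ^ 2 = (s : ℂ) + (1 - (s : ℂ)) * z ^ 2) (hw0 : w ≠ 0) (u x : ℝ) :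
    (∫ v : ℝ, ∫ y : ℝ,
        ∑ ℓ ∈ Finset.range (N + 1), a ℓ *
          (z * ((x : ℂ) + Complex.I * (y : ℂ)) * (Real.sqrt (1 - s) : ℂ)
            + ((u : ℂ) + Complex.I * (v : ℂ)) * (Real.sqrt s : ℂ)) ^ ℓ ∂γ ∂γ)
      = ∑ ℓ ∈ Finset.range (N + 1), a ℓ * w ^ ℓ *
          Hpoly ℓ ((((u * Real.sqrt s : ℝ) : ℂ) + z * (x : ℂ) * (Real.sqrt (1 - s) : ℂ)) / w) := by
  set A : ℂ := ((u * Real.sqrt s : ℝ) : ℂ) + z * (x : ℂ) * (Real.sqrt (1 - s) : ℂ)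
  have hsqrt (r : ℝ) (hr : 0 ≤ r) : ((Real.sqrt r : ℝ) : ℂ) ^ 2 = r := by
    rw [← Complex.ofReal_pow, Real.sq_sqrt hr]
  have hW : (Complex.I * w) ^ 2
      = (Complex.I * z * Real.sqrt (1 - s)) ^ 2 + (Complex.I * Real.sqrt s) ^ 2 := by
    simp only [mul_pow, hsqrt s hs0, hsqrt (1 - s) (by linarith), hw]
    push_cast
    ring
  have hlin (v y : ℝ) : z * ((x : ℂ) + Complex.I * y) * (Real.sqrt (1 - s) : ℂ)
      + ((u : ℂ) + Complex.I * v) * (Real.sqrt s : ℂ)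
      = A + Complex.I * Real.sqrt s * v + Complex.I * z * Real.sqrt (1 - s) * y := by
    simp only [A]; push_cast; ring
  simp_rw [hlin, integral_integral_sum_mul_add_add_mul_pow hW, integral_add_I_mul_pow A hw0,
    mul_assoc]

end
end

section
/- Let g(x) = Σ_{ℓ=0}^{N} a_ℓ x^ℓ with a_ℓ ∈ ℂ and let g̃ := Σ_{ℓ=0}^{N} a_ℓ H_ℓ. Let 1 ≤ p ≤ q < ∞, s ∈ (0,1), and z ∈ ℂ with |z| < 1. Then ∫_ℝ ( ∫_ℝ | ∫_ℝ ∫_ℝ g( (u+iv)√s + z (x+iy)√(1-s) ) dγ(v) dγ(y) |^q dγ(x) )^{p/q} dγ(u) = ∫_ℝ ( ∫_ℝ | P_{(1-s)(1-z²)} g̃ ( u√s + z x √(1-s) ) |^q dγ(x) )^{p/q} dγ(u). -/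
/-!
In `ℂ⟦X⟧` let `G_c = e^{cX²/2}` and `appell F n x = n! [Xⁿ] F·e^{xX}`; thus `appell 1 n x = xⁿ`
and `appell G_c n x` is the `n`-th moment of a Gaussian with mean `x` and variance `c`.
Gaussian averaging acts on these polynomials by multiplying the series: averaging
`y ↦ appell F n (x + α y)` against `γ` gives `appell (G_{α²} F) n x`, and the complex heat flow
`P_τ` sends `appell F n` to `appell (F G_τ) n`. Both come down to the moments of the kernel
`e^{-(ξ-t)²/(2τ)}`, which obey the Gaussian recursion `m_{j+2} = (j+1) τ m_j` by integration by
parts, also for complex `τ` with `Re τ > 0`. As `H_m = appell G_{-1} m` and `G_c G_e = G_{c+e}`,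
taking `τ = (1-s)(1-z²)`, `α = i√s`, `β = iz√(1-s)` (so that `α² + β² = τ - 1`), both sides equal
`Σ a_ℓ appell G_{τ-1} ℓ` at `u√s + zx√(1-s)`.
-/

open MeasureTheory Finset

noncomputable section

/-- The Beckner--Janson flow `s ↦ ∫ (∫ |∫∫ g((u+iv)√s + z(x+iy)√(1-s)) dγ(v) dγ(y)|^q dγ(x))^{p/q} dγ(u)`
for the polynomial `g(ξ) = ∑_{ℓ=0}^{L} a ℓ · ξ^ℓ`. -/
def becknerFlow (p q : ℝ) (z : ℂ) (L : ℕ) (a : ℕ → ℂ) (s : ℝ) : ℝ :=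
  ∫ u : ℝ, (∫ x : ℝ, ‖(∫ y : ℝ, ∫ v : ℝ,
      ∑ ℓ ∈ Finset.range (L + 1), a ℓ *
        (((u : ℂ) + Complex.I * (v : ℂ)) * (Real.sqrt s : ℂ)
          + z * ((x : ℂ) + Complex.I * (y : ℂ)) * (Real.sqrt (1 - s) : ℂ)) ^ ℓ
      ∂γ ∂γ)‖ ^ q ∂γ) ^ (p / q) ∂γ

open PowerSeries Filter
open scoped Nat

def gaussEGF (c : ℂ) : ℂ⟦X⟧ := expand 2 two_ne_zero (rescale (c / 2) (exp ℂ))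

theorem gaussEGF_mul_gaussEGF (c e : ℂ) : gaussEGF c * gaussEGF e = gaussEGF (c + e) := by
  rw [gaussEGF, gaussEGF, gaussEGF, ← map_mul, exp_mul_exp_eq_exp_add, add_div]

theorem coeff_gaussEGF_two_mul (c : ℂ) (k : ℕ) :
    coeff (2 * k) (gaussEGF c) = (c / 2) ^ k / k ! := by
  simp [gaussEGF, coeff_rescale, coeff_exp, div_eq_mul_inv]

theorem coeff_gaussEGF_two_mul_add_one (c : ℂ) (k : ℕ) :
    coeff (2 * k + 1) (gaussEGF c) = 0 :=
  coeff_expand_of_not_dvd _ _ _ (by omega)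

def appell (F : ℂ⟦X⟧) (n : ℕ) (x : ℂ) : ℂ := n ! * coeff n (F * rescale x (exp ℂ))

theorem appell_zero_right (F : ℂ⟦X⟧) (n : ℕ) : appell F n 0 = n ! * coeff n F := by
  simp [appell]

theorem factorial_mul_coeff_rescale_exp (n : ℕ) (x : ℂ) :
    n ! * coeff n (rescale x (exp ℂ)) = x ^ n := by
  have : (n ! : ℂ) ≠ 0 := Nat.cast_ne_zero.2 n.factorial_ne_zero
  rw [coeff_rescale, coeff_exp, map_div₀, map_one, map_natCast]
  field_simp

theorem appell_one (n : ℕ) (x : ℂ) : appell 1 n x = x ^ n := by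
  rw [appell, one_mul, factorial_mul_coeff_rescale_exp]

theorem appell_mul (F G : ℂ⟦X⟧) (n : ℕ) (x : ℂ) :
    appell (F * G) n x
      = ∑ j ∈ range (n + 1), n.choose j * appell F (n - j) 0 * appell G j x := by
  rw [appell, mul_assoc, coeff_mul, ← Nat.sum_antidiagonal_swap,
    Nat.sum_antidiagonal_eq_sum_range_succ_mk, mul_sum]
  refine sum_congr rfl fun j hj => ?_
  rw [appell_zero_right, appell]
  have := Nat.choose_mul_factorial_mul_factorial (Nat.lt_succ_iff.mp (mem_range.mp hj))
  rw [← this, Prod.fst_swap, Prod.snd_swap]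
  push_cast
  ring

theorem appell_eq_sum_pow (F : ℂ⟦X⟧) (n : ℕ) (x : ℂ) :
    appell F n x = ∑ j ∈ range (n + 1), n.choose j * appell F (n - j) 0 * x ^ j := by
  simpa only [mul_one, appell_one] using appell_mul F 1 n x

theorem appell_add (F : ℂ⟦X⟧) (n : ℕ) (x w : ℂ) :
    appell F n (x + w) = ∑ j ∈ range (n + 1), n.choose j * w ^ (n - j) * appell F j x := by
  have : appell F n (x + w) = appell (rescale w (exp ℂ) * F) n x := by
    rw [appell, appell, mul_assoc, mul_left_comm, exp_mul_exp_eq_exp_add, add_comm]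
  rw [this, appell_mul]
  simp only [appell_zero_right, factorial_mul_coeff_rescale_exp]

theorem appell_gaussEGF_sq_mul_at_zero (c α : ℂ) (j : ℕ) :
    appell (gaussEGF (α ^ 2 * c)) j 0 = α ^ j * appell (gaussEGF c) j 0 := by
  rw [appell_zero_right, appell_zero_right]
  obtain ⟨k, rfl | rfl⟩ := Nat.even_or_odd' j
  · rw [coeff_gaussEGF_two_mul, coeff_gaussEGF_two_mul, pow_mul]; ring
  · simp [coeff_gaussEGF_two_mul_add_one]

theorem appell_gaussEGF_add_two_at_zero (c : ℂ) (j : ℕ) :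
    appell (gaussEGF c) (j + 2) 0 = (j + 1) * c * appell (gaussEGF c) j 0 := by
  rw [appell_zero_right, appell_zero_right]
  obtain ⟨k, rfl | rfl⟩ := Nat.even_or_odd' j
  · rw [show 2 * k + 2 = 2 * (k + 1) by ring, coeff_gaussEGF_two_mul, coeff_gaussEGF_two_mul]
    push_cast [Nat.factorial_succ, show 2 * (k + 1) = (2 * k + 1) + 1 by ring]
    field_simp
    ring
  · rw [show 2 * k + 1 + 2 = 2 * (k + 1) + 1 by ring, coeff_gaussEGF_two_mul_add_one,
      coeff_gaussEGF_two_mul_add_one]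
    simp

theorem appell_gaussEGF_zero_at_zero (c : ℂ) : appell (gaussEGF c) 0 0 = 1 := by
  simpa [appell_zero_right] using coeff_gaussEGF_two_mul c 0

theorem appell_gaussEGF_one_at_zero (c : ℂ) : appell (gaussEGF c) 1 0 = 0 := by
  simpa [appell_zero_right] using coeff_gaussEGF_two_mul_add_one c 0

theorem integrable_sub_pow_mul_cexp_quadratic {b : ℂ} (hb : 0 < b.re) (c d a : ℂ) (m : ℕ) :
    Integrable (fun x : ℝ => ((x : ℂ) - a) ^ m * Complex.exp (-b * x ^ 2 + c * x + d)) := by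
  have hshift (s : ℝ) (x : ℝ) : ‖Complex.exp (-b * x ^ 2 + (c + s) * x + d)‖
      = Real.exp (s * x) * ‖Complex.exp (-b * x ^ 2 + c * x + d)‖ := by
    rw [show -b * x ^ 2 + (c + s) * x + d = (-b * x ^ 2 + c * x + d) + ((s * x : ℝ) : ℂ) by
      push_cast; ring, Complex.exp_add, norm_mul, Complex.norm_exp_ofReal, mul_comm]
  have hpos := (integrable_cexp_quadratic hb (c + (1 : ℝ)) d).norm
  have hneg := (integrable_cexp_quadratic hb (c + (-1 : ℝ)) d).norm
  refine ((hpos.add hneg).const_mul (m ! * Real.exp ‖a‖)).mono' (by fun_prop)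
    (Eventually.of_forall fun x => ?_)
  -- `‖x - a‖ ^ m ≤ m! e^{‖a‖} (e^x + e^{-x})` trades the polynomial for two shifted Gaussians
  have hpow : ‖(x : ℂ) - a‖ ^ m ≤ m ! * Real.exp ‖a‖ * (Real.exp x + Real.exp (-x)) := by
    have h₁ : ‖(x : ℂ) - a‖ ≤ |x| + ‖a‖ := (norm_sub_le _ _).trans (by simp)
    have h₂ : Real.exp |x| ≤ Real.exp x + Real.exp (-x) := by
      rcases abs_cases x with ⟨h, -⟩ | ⟨h, -⟩ <;> rw [h] <;>
        linarith [Real.exp_pos x, Real.exp_pos (-x)]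
    have h₃ := Real.pow_div_factorial_le_exp (x := ‖(x : ℂ) - a‖) (norm_nonneg _) m
    rw [div_le_iff₀ (by positivity)] at h₃
    calc ‖(x : ℂ) - a‖ ^ m ≤ Real.exp (|x| + ‖a‖) * m ! := h₃.trans (by gcongr)
      _ ≤ _ := by
        rw [Real.exp_add]
        have := mul_le_mul_of_nonneg_right h₂ (by positivity : (0 : ℝ) ≤ Real.exp ‖a‖ * m !)
        linarith
  simp only [Pi.add_apply, hshift, norm_mul, norm_pow, one_mul, neg_one_mul]
  rw [← add_mul, ← mul_assoc]
  exact mul_le_mul_of_nonneg_right hpow (norm_nonneg _)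

theorem neg_sub_sq_div_eq_quadratic {τ : ℂ} (hτ : τ ≠ 0) (ξ : ℂ) (t : ℝ) :
    -(ξ - t) ^ 2 / (2 * τ) = -(2 * τ)⁻¹ * (t : ℂ) ^ 2 + ξ / τ * t + -(ξ ^ 2 / (2 * τ)) := by
  field_simp
  ring

theorem re_inv_two_mul_pos {τ : ℂ} (hτ : 0 < τ.re) : 0 < ((2 * τ)⁻¹).re := by
  rw [Complex.inv_re]
  exact div_pos (by simpa using hτ)
    (Complex.normSq_pos.2 (mul_ne_zero two_ne_zero (Complex.ne_zero_of_re_pos hτ)))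

theorem integrable_sub_pow_mul_heatKernel {τ : ℂ} (hτ : 0 < τ.re) (ξ a : ℂ) (m : ℕ) :
    Integrable (fun t : ℝ => ((t : ℂ) - a) ^ m * Complex.exp (-(ξ - t) ^ 2 / (2 * τ))) := by
  simpa only [neg_sub_sq_div_eq_quadratic (Complex.ne_zero_of_re_pos hτ)] using
    integrable_sub_pow_mul_cexp_quadratic (re_inv_two_mul_pos hτ) (ξ / τ) (-(ξ ^ 2 / (2 * τ))) a m

theorem heatP_eq_integral_div (τ ξ : ℂ) (h : ℂ → ℂ) :
    heatP τ h ξ = (∫ t : ℝ, h t * Complex.exp (-(ξ - t) ^ 2 / (2 * τ)))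
      / (2 * (Real.pi : ℂ) * τ) ^ ((1 : ℂ) / 2) :=
  integral_div _ _

theorem heatP_sum_mul {ι : Type*} (s : Finset ι) (c : ι → ℂ) (f : ι → ℂ → ℂ) (τ ξ : ℂ)
    (hf : ∀ i ∈ s, Integrable (fun t : ℝ => f i t * Complex.exp (-(ξ - t) ^ 2 / (2 * τ)))) :
    heatP τ (fun w => ∑ i ∈ s, c i * f i w) ξ = ∑ i ∈ s, c i * heatP τ (f i) ξ := by
  simp only [heatP_eq_integral_div, Finset.sum_mul, mul_assoc]
  rw [integral_finsetSum s fun i hi => (hf i hi).const_mul (c i), Finset.sum_div]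
  simp only [integral_const_mul, mul_div_assoc]

theorem heatP_const_one {τ : ℂ} (hτ : 0 < τ.re) (ξ : ℂ) : heatP τ (fun _ => 1) ξ = 1 := by
  have hτ0 := Complex.ne_zero_of_re_pos hτ
  have hZ : (2 * (Real.pi : ℂ) * τ) ^ ((1 : ℂ) / 2) ≠ 0 := by
    rw [Ne, Complex.cpow_eq_zero_iff]
    exact fun h => mul_ne_zero (mul_ne_zero two_ne_zero (by exact_mod_cast Real.pi_ne_zero)) hτ0 h.1
  have hb : (-(2 * τ)⁻¹).re < 0 := by simpa using re_inv_two_mul_pos hτ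
  rw [heatP_eq_integral_div, div_eq_one_iff_eq hZ]
  simp only [one_mul, neg_sub_sq_div_eq_quadratic hτ0]
  rw [integral_cexp_quadratic hb]
  have hexp : -(ξ ^ 2 / (2 * τ)) - (ξ / τ) ^ 2 / (4 * -(2 * τ)⁻¹) = 0 := by
    field_simp
    ring_nf
  have hπ : (Real.pi : ℂ) / -(-(2 * τ)⁻¹) = 2 * Real.pi * τ := by
    field_simp
  rw [hexp, Complex.exp_zero, mul_one, hπ]

-- Integration by parts; for `j = 0` the factor `j` makes the truncated exponent `j - 1` harmless.
theorem integral_sub_pow_succ_mul_heatKernel {τ : ℂ} (hτ : 0 < τ.re) (ξ : ℂ) (j : ℕ) :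
    ∫ t : ℝ, ((t : ℂ) - ξ) ^ (j + 1) * Complex.exp (-(ξ - t) ^ 2 / (2 * τ))
      = τ * j * ∫ t : ℝ, ((t : ℂ) - ξ) ^ (j - 1) * Complex.exp (-(ξ - t) ^ 2 / (2 * τ)) := by
  have hderiv (t : ℝ) : HasDerivAt
      (fun t : ℝ => ((t : ℂ) - ξ) ^ j * Complex.exp (-(ξ - t) ^ 2 / (2 * τ)))
      (j * (((t : ℂ) - ξ) ^ (j - 1) * Complex.exp (-(ξ - t) ^ 2 / (2 * τ)))
        - τ⁻¹ * (((t : ℂ) - ξ) ^ (j + 1) * Complex.exp (-(ξ - t) ^ 2 / (2 * τ)))) t := by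
    have hpow := ((hasDerivAt_id (t : ℂ)).sub_const ξ).pow j
    have hK := ((((hasDerivAt_id (t : ℂ)).const_sub ξ).pow 2).neg.div_const (2 * τ)).cexp
    refine HasDerivAt.comp_ofReal
      (e := fun w : ℂ => (w - ξ) ^ j * Complex.exp (-(ξ - w) ^ 2 / (2 * τ))) ?_
    exact (hpow.mul hK).congr_deriv (by simp only [id, Pi.pow_apply, Pi.neg_apply]; ring)
  have hint (k : ℕ) := integrable_sub_pow_mul_heatKernel hτ ξ ξ k
  have hzero := integral_eq_zero_of_hasDerivAt_of_integrable hderiv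
    (((hint (j - 1)).const_mul _).sub ((hint (j + 1)).const_mul _)) (hint j)
  rw [integral_sub ((hint (j - 1)).const_mul _) ((hint (j + 1)).const_mul _),
    integral_const_mul, integral_const_mul] at hzero
  linear_combination (-τ) * hzero
    - (∫ t : ℝ, ((t : ℂ) - ξ) ^ (j + 1) * Complex.exp (-(ξ - t) ^ 2 / (2 * τ)))
      * mul_inv_cancel₀ (Complex.ne_zero_of_re_pos hτ)

theorem heatP_sub_pow {τ : ℂ} (hτ : 0 < τ.re) (ξ : ℂ) :
    ∀ j : ℕ, heatP τ (fun w => (w - ξ) ^ j) ξ = appell (gaussEGF τ) j 0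
  | 0 => by simpa [appell_gaussEGF_zero_at_zero] using heatP_const_one hτ ξ
  | 1 => by
    rw [appell_gaussEGF_one_at_zero, heatP_eq_integral_div, div_eq_zero_iff]
    left
    simpa using integral_sub_pow_succ_mul_heatKernel hτ ξ 0
  | j + 2 => by
    rw [appell_gaussEGF_add_two_at_zero, ← heatP_sub_pow hτ ξ j, heatP_eq_integral_div,
      heatP_eq_integral_div, integral_sub_pow_succ_mul_heatKernel hτ ξ (j + 1)]
    push_cast
    ring

theorem heatP_pow {τ : ℂ} (hτ : 0 < τ.re) (ξ : ℂ) (m : ℕ) :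
    heatP τ (fun w => w ^ m) ξ = appell (gaussEGF τ) m ξ := by
  have hexpand (w : ℂ) :
      w ^ m = ∑ j ∈ range (m + 1), (m.choose j * appell 1 j ξ) * (w - ξ) ^ (m - j) := by
    rw [← appell_one, ← add_sub_cancel ξ w, appell_add, add_sub_cancel_left]
    exact sum_congr rfl fun j _ => by ring
  simp only [hexpand]
  rw [heatP_sum_mul _ _ _ _ _ fun j _ => integrable_sub_pow_mul_heatKernel hτ ξ ξ _,
    ← mul_one (gaussEGF τ), appell_mul]
  simp only [heatP_sub_pow hτ]
  exact sum_congr rfl fun j _ => by ring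

theorem integrable_appell_mul_heatKernel {τ : ℂ} (hτ : 0 < τ.re) (F : ℂ⟦X⟧) (n : ℕ)
    (x α ξ : ℂ) :
    Integrable (fun t : ℝ => appell F n (x + α * t) * Complex.exp (-(ξ - t) ^ 2 / (2 * τ))) := by
  simp only [appell_add, sum_mul]
  refine integrable_finsetSum _ fun j _ => ?_
  refine ((integrable_sub_pow_mul_heatKernel hτ ξ 0 (n - j)).const_mul
    (n.choose j * α ^ (n - j) * appell F j x)).congr (Eventually.of_forall fun t => ?_)
  simp only [sub_zero, mul_pow]
  ring

theorem heatP_appell {τ : ℂ} (hτ : 0 < τ.re) (F : ℂ⟦X⟧) (n : ℕ) (ξ : ℂ) :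
    heatP τ (appell F n) ξ = appell (F * gaussEGF τ) n ξ := by
  have hexpand : appell F n
      = fun w => ∑ j ∈ range (n + 1), (n.choose j * appell F (n - j) 0) * w ^ j :=
    funext (appell_eq_sum_pow F n)
  rw [hexpand, heatP_sum_mul _ _ _ _ _ fun j _ => by
    simpa using integrable_sub_pow_mul_heatKernel hτ ξ 0 j, appell_mul]
  simp only [heatP_pow hτ]

theorem heatP_appell_add_mul {τ : ℂ} (hτ : 0 < τ.re) (F : ℂ⟦X⟧) (n : ℕ) (x α : ℂ) :
    heatP τ (fun w => appell F n (x + α * w)) 0 = appell (gaussEGF (α ^ 2 * τ) * F) n x := by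
  have hexpand (w : ℂ) : appell F n (x + α * w)
      = ∑ j ∈ range (n + 1), (n.choose j * α ^ (n - j) * appell F j x) * w ^ (n - j) := by
    rw [appell_add]
    exact sum_congr rfl fun j _ => by ring
  simp only [hexpand]
  rw [heatP_sum_mul _ _ _ _ _ fun j _ => by
    simpa using integrable_sub_pow_mul_heatKernel hτ 0 0 (n - j), appell_mul]
  simp only [heatP_pow hτ, appell_gaussEGF_sq_mul_at_zero]
  exact sum_congr rfl fun j _ => by ring

theorem integral_gamma_eq_heatP (f : ℂ → ℂ) : ∫ y, f y ∂γ = heatP 1 f 0 := by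
  rw [γ, ProbabilityTheory.integral_gaussianReal_eq_integral_smul one_ne_zero, heatP]
  congr 1 with t
  have hZ : (2 * (Real.pi : ℂ) * 1) ^ ((1 : ℂ) / 2) = (Real.sqrt (2 * Real.pi) : ℂ) := by
    rw [Real.sqrt_eq_rpow, Complex.ofReal_cpow (by positivity)]
    push_cast
    ring_nf
  rw [hZ, ProbabilityTheory.gaussianPDFReal, Complex.real_smul]
  push_cast
  ring_nf

theorem integral_appell_add_mul_gamma (F : ℂ⟦X⟧) (n : ℕ) (x α : ℂ) :
    ∫ y, appell F n (x + α * y) ∂γ = appell (gaussEGF (α ^ 2) * F) n x := by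
  rw [integral_gamma_eq_heatP (fun w => appell F n (x + α * w)), heatP_appell_add_mul (by simp),
    mul_one]

theorem Hpoly_eq_appell (m : ℕ) (x : ℂ) : Hpoly m x = appell (gaussEGF (-1)) m x := by
  simpa [Hpoly, appell_one] using integral_appell_add_mul_gamma 1 m x Complex.I

theorem integral_sum_appell_add_mul_gamma (s : Finset ℕ) (a : ℕ → ℂ) (F : ℂ⟦X⟧) (x α : ℂ) :
    ∫ y, ∑ ℓ ∈ s, a ℓ * appell F ℓ (x + α * y) ∂γ
      = ∑ ℓ ∈ s, a ℓ * appell (gaussEGF (α ^ 2) * F) ℓ x := by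
  rw [integral_gamma_eq_heatP (fun w => ∑ ℓ ∈ s, a ℓ * appell F ℓ (x + α * w)),
    heatP_sum_mul s a (fun ℓ w => appell F ℓ (x + α * w)) 1 0 fun ℓ _ =>
      integrable_appell_mul_heatKernel (by simp) F ℓ x α 0]
  simp only [heatP_appell_add_mul (by simp : (0 : ℝ) < (1 : ℂ).re), mul_one]

theorem heatP_sum_appell {τ : ℂ} (hτ : 0 < τ.re) (s : Finset ℕ) (a : ℕ → ℂ) (F : ℂ⟦X⟧)
    (ξ : ℂ) :
    heatP τ (fun w => ∑ ℓ ∈ s, a ℓ * appell F ℓ w) ξ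
      = ∑ ℓ ∈ s, a ℓ * appell (F * gaussEGF τ) ℓ ξ := by
  rw [heatP_sum_mul s a (appell F) τ ξ fun ℓ _ => by
    simpa using integrable_appell_mul_heatKernel hτ F ℓ 0 1 ξ]
  simp only [heatP_appell hτ]

theorem integral_integral_sum_pow_gamma_eq_heatP_sum_Hpoly (N : ℕ) (a : ℕ → ℂ) {ξ α β τ : ℂ}
    (hτ : 0 < τ.re) (hαβ : α ^ 2 + β ^ 2 = τ - 1) :
    ∫ y, ∫ v, ∑ ℓ ∈ range (N + 1), a ℓ * (ξ + α * v + β * y) ^ ℓ ∂γ ∂γ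
      = heatP τ (fun t => ∑ ℓ ∈ range (N + 1), a ℓ * Hpoly ℓ t) ξ := by
  have hinner (y : ℝ) : ∫ v, ∑ ℓ ∈ range (N + 1), a ℓ * (ξ + α * v + β * y) ^ ℓ ∂γ
      = ∑ ℓ ∈ range (N + 1), a ℓ * appell (gaussEGF (α ^ 2)) ℓ (ξ + β * y) := by
    simpa [appell_one, add_right_comm] using
      integral_sum_appell_add_mul_gamma (range (N + 1)) a 1 (ξ + β * y) α
  simp only [hinner, integral_sum_appell_add_mul_gamma, Hpoly_eq_appell, heatP_sum_appell hτ,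
    gaussEGF_mul_gaussEGF]
  rw [show β ^ 2 + α ^ 2 = -1 + τ by linear_combination hαβ]

theorem re_one_sub_sq_pos {z : ℂ} (hz : ‖z‖ < 1) : 0 < (1 - z ^ 2).re := by
  have h : (z ^ 2).re ≤ ‖z‖ ^ 2 := (Complex.re_le_norm _).trans_eq (norm_pow _ _)
  rw [Complex.sub_re, Complex.one_re]
  nlinarith [norm_nonneg z]

theorem stmt13_general (N : ℕ) (a : ℕ → ℂ) (p q : ℝ)
    (s : ℝ) (hs0 : 0 < s) (hs1 : s < 1) (z : ℂ) (hz : ‖z‖ < 1) :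
    becknerFlow p q z N a s
      = ∫ u : ℝ, (∫ x : ℝ, ‖
          (heatP ((1 - (s : ℂ)) * (1 - z ^ 2))
            (fun ξ => ∑ ℓ ∈ Finset.range (N + 1), a ℓ * Hpoly ℓ ξ)
            (((u * Real.sqrt s : ℝ) : ℂ) + z * (x : ℂ) * (Real.sqrt (1 - s) : ℂ)))‖ ^ q
          ∂γ) ^ (p / q) ∂γ := by
  have hτ : 0 < ((1 - (s : ℂ)) * (1 - z ^ 2)).re := by
    rw [show 1 - (s : ℂ) = ((1 - s : ℝ) : ℂ) by push_cast; ring, Complex.re_ofReal_mul]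
    exact mul_pos (by linarith) (re_one_sub_sq_pos hz)
  have hαβ : (Complex.I * Real.sqrt s) ^ 2 + (Complex.I * z * Real.sqrt (1 - s)) ^ 2
      = (1 - (s : ℂ)) * (1 - z ^ 2) - 1 := by
    simp only [mul_pow, Complex.I_sq, ← Complex.ofReal_pow, Real.sq_sqrt hs0.le,
      Real.sq_sqrt (sub_nonneg.2 hs1.le)]
    push_cast
    ring
  have hsplit (u v x y : ℝ) :
      ((u : ℂ) + Complex.I * v) * (Real.sqrt s : ℂ)
          + z * ((x : ℂ) + Complex.I * y) * (Real.sqrt (1 - s) : ℂ)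
        = (((u * Real.sqrt s : ℝ) : ℂ) + z * x * Real.sqrt (1 - s)) + Complex.I * Real.sqrt s * v
          + Complex.I * z * Real.sqrt (1 - s) * y := by
    push_cast
    ring
  simp only [becknerFlow, hsplit, integral_integral_sum_pow_gamma_eq_heatP_sum_Hpoly N a hτ hαβ]

/-- the Beckner--Janson flow rewritten through the analytically
extended heat flow. -/
theorem stmt13 (N : ℕ) (a : ℕ → ℂ) (p q : ℝ) (hp : 1 ≤ p) (hpq : p ≤ q)
    (s : ℝ) (hs0 : 0 < s) (hs1 : s < 1) (z : ℂ) (hz : ‖z‖ < 1) :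
    becknerFlow p q z N a s
      = ∫ u : ℝ, (∫ x : ℝ, ‖
          (heatP ((1 - (s : ℂ)) * (1 - z ^ 2))
            (fun ξ => ∑ ℓ ∈ Finset.range (N + 1), a ℓ * Hpoly ℓ ξ)
            (((u * Real.sqrt s : ℝ) : ℂ) + z * (x : ℂ) * (Real.sqrt (1 - s) : ℂ)))‖ ^ q
          ∂γ) ^ (p / q) ∂γ :=
  stmt13_general N a p q s hs0 hs1 z hz
end
end

section
/- Let 1 < p ≤ 2 and q = p/(p-1). Let g̃ = Σ_{ℓ=0}^{N} a_ℓ H_ℓ be a polynomial written in the Hermite basis, with a_ℓ ∈ ℂ, and define f(y) := g̃(y) e^{−y²/(2p)} (2π)^{−1/(2p)}. Then (p^{1/(2p)} / q^{1/(2q)}) · ( ∫_ℝ | Σ_{ℓ=0}^{N} a_ℓ (i√(p-1))^ℓ H_ℓ(x) |^q dγ(x) )^{1/q} = ( ∫_ℝ | f̂(ξ) |^q dξ )^{1/q}, where f̂(ξ) = ∫_ℝ f(y) e^{−2πiξy} dy. -/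
open MeasureTheory Finset

noncomputable section

/-!
Termwise, the Fourier transform of `f` involves the integrals
`Iₙ = ∫ Hₙ(y) e^{-y²/(2p) - 2πiξy} dy`. Once `Hₙ` is identified with the probabilists' Hermite
polynomial, Gaussian integration by parts shows that `Iₙ` satisfies the same three-term recurrence
as `I₀ (i√(p-1))ⁿ Hₙ(κξ)`, where `κ = -2πp/√(p-1)`. So `f̂(ξ)` is a Gaussian in `ξ` times the
polynomial on the left-hand side evaluated at `κξ`. Raising to the power `q` turns that Gaussian
into the standard Gaussian density at `κξ`, and the substitution `x = κξ` leaves only a constant.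
-/

open Polynomial Complex
open scoped Real

namespace Polynomial

theorem derivative_hermite_succ (n : ℕ) :
    derivative (hermite (n + 1)) = (n + 1 : ℤ[X]) * hermite n := by
  induction n with
  | zero => simp
  | succ n ih =>
    rw [hermite_succ (n + 1), derivative_sub, derivative_mul, derivative_X, ih, hermite_succ n]
    simp only [derivative_mul, derivative_add, derivative_natCast, derivative_one]
    push_cast
    ring

theorem hermite_add_two (n : ℕ) :
    hermite (n + 2) = X * hermite (n + 1) - (n + 1 : ℤ[X]) * hermite n := by
  rw [hermite_succ (n + 1), derivative_hermite_succ]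

theorem aeval_hermite_add_two {A : Type*} [CommRing A] (x : A) (n : ℕ) :
    aeval x (hermite (n + 2)) = x * aeval x (hermite (n + 1)) - (n + 1) * aeval x (hermite n) := by
  rw [hermite_add_two]
  simp only [map_sub, map_mul, aeval_X, map_add, map_natCast, map_one]

end Polynomial

lemma eq_of_two_step_recurrence {R : Type*} [Semiring R] {f g : ℕ → R} (α : R) (β : ℕ → R)
    (hf : ∀ n, f (n + 2) = α * f (n + 1) + β n * f n)
    (hg : ∀ n, g (n + 2) = α * g (n + 1) + β n * g n)
    (h0 : f 0 = g 0) (h1 : f 1 = g 1) : f = g := by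
  funext n
  induction n using Nat.twoStepInduction with
  | zero => exact h0
  | one => exact h1
  | more n ih ih' => rw [hf, hg, ih, ih']

def gaussianWave (v θ y : ℝ) : ℂ := cexp (-(y : ℂ) ^ 2 / (2 * v) + θ * I * y)

section GaussianWave

variable {v : ℝ} (θ : ℝ)

lemma norm_gaussianWave (y : ℝ) : ‖gaussianWave v θ y‖ = rexp (-(2 * v)⁻¹ * y ^ 2) := by
  have h : -(y : ℂ) ^ 2 / (2 * v) + θ * I * y
      = ((-(2 * v)⁻¹ * y ^ 2 : ℝ) : ℂ) + (θ * y : ℝ) * I := by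
    push_cast
    ring
  rw [gaussianWave, norm_exp, h, add_re, ofReal_re, re_ofReal_mul, I_re, mul_zero, add_zero]

lemma hasDerivAt_gaussianWave (y : ℝ) :
    HasDerivAt (gaussianWave v θ) ((θ * I - y / v) * gaussianWave v θ y) y := by
  have h : HasDerivAt (fun z : ℂ => -z ^ 2 / (2 * v) + θ * I * z) (θ * I - y / v) y := by
    refine (((hasDerivAt_pow 2 (y : ℂ)).neg.div_const (2 * v)).add
      ((hasDerivAt_id (y : ℂ)).const_mul (θ * I))).congr_deriv ?_
    push_cast
    ring
  exact h.cexp.comp_ofReal.congr_deriv (mul_comm _ _)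

lemma integrable_pow_mul_gaussianWave (hv : 0 < v) (n : ℕ) :
    Integrable (fun y : ℝ => (y : ℂ) ^ n * gaussianWave v θ y) := by
  have h := integrable_rpow_mul_exp_neg_mul_sq (inv_pos.2 (mul_pos two_pos hv))
    (s := n) (by linarith [(n.cast_nonneg : (0 : ℝ) ≤ n)])
  refine h.norm.mono' (by unfold gaussianWave; fun_prop) (ae_of_all _ fun y => ?_)
  simp [norm_gaussianWave]

lemma integrable_aeval_mul_gaussianWave {R : Type*} [CommSemiring R] [Algebra R ℂ]
    (hv : 0 < v) (P : R[X]) :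
    Integrable (fun y : ℝ => aeval (y : ℂ) P * gaussianWave v θ y) := by
  induction P using Polynomial.induction_on' with
  | add P Q hP hQ =>
    refine (hP.add hQ).congr (ae_of_all _ fun y => ?_)
    simp only [Pi.add_apply, map_add, add_mul]
  | monomial n a =>
    simpa [mul_assoc] using (integrable_pow_mul_gaussianWave θ hv n).const_mul (algebraMap R ℂ a)

lemma integral_X_mul_aeval_mul_gaussianWave {R : Type*} [CommSemiring R] [Algebra R ℂ]
    (hv : 0 < v) (P : R[X]) :
    ∫ y : ℝ, aeval (y : ℂ) (X * P) * gaussianWave v θ y =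
      v * ((∫ y : ℝ, aeval (y : ℂ) (derivative P) * gaussianWave v θ y) +
        θ * I * ∫ y : ℝ, aeval (y : ℂ) P * gaussianWave v θ y) := by
  have hw (Q : R[X]) := integrable_aeval_mul_gaussianWave θ hv Q
  have hderiv : ∀ y : ℝ, HasDerivAt (fun y : ℝ => aeval (y : ℂ) P * gaussianWave v θ y)
      (aeval (y : ℂ) (derivative P) * gaussianWave v θ y
        + θ * I * (aeval (y : ℂ) P * gaussianWave v θ y)
        - (v : ℂ)⁻¹ * (aeval (y : ℂ) (X * P) * gaussianWave v θ y)) y := fun y => by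
    refine (((P.hasDerivAt_aeval (y : ℂ)).comp_ofReal).mul
      (hasDerivAt_gaussianWave θ y)).congr_deriv ?_
    simp only [map_mul, aeval_X]
    ring
  have hsum : Integrable (fun y : ℝ => aeval (y : ℂ) (derivative P) * gaussianWave v θ y
      + θ * I * (aeval (y : ℂ) P * gaussianWave v θ y)) :=
    (hw (derivative P)).add ((hw P).const_mul (θ * I))
  have h0 := integral_eq_zero_of_hasDerivAt_of_integrable hderiv
    (hsum.sub ((hw (X * P)).const_mul _)) (hw P)
  rw [integral_sub hsum ((hw (X * P)).const_mul _), integral_add (hw (derivative P))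
    ((hw P).const_mul _), integral_const_mul, integral_const_mul] at h0
  have hv' : (v : ℂ) ≠ 0 := ofReal_ne_zero.2 hv.ne'
  field_simp at h0
  linear_combination -h0

lemma integral_gaussianWave (hv : 0 < v) :
    ∫ y : ℝ, gaussianWave v θ y = (√(2 * π * v) * rexp (-(v * θ ^ 2 / 2)) : ℝ) := by
  have hv' : (v : ℂ) ≠ 0 := ofReal_ne_zero.2 hv.ne'
  have hb : (-(2 * v : ℂ)⁻¹).re < 0 := by
    rw [neg_re, neg_lt_zero, ← ofReal_ofNat, ← ofReal_mul, ← ofReal_inv, ofReal_re]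
    positivity
  have hsqrt : (π / -(-(2 * v : ℂ)⁻¹)) ^ (1 / 2 : ℂ) = (√(2 * π * v) : ℝ) := by
    rw [neg_neg, div_inv_eq_mul, Real.sqrt_eq_rpow, ofReal_cpow (by positivity)]
    push_cast
    ring_nf
  calc ∫ y : ℝ, gaussianWave v θ y
      = ∫ y : ℝ, cexp (-(2 * v : ℂ)⁻¹ * y ^ 2 + θ * I * y + 0) := by
        simp only [gaussianWave, add_zero, div_eq_inv_mul, neg_mul, mul_neg]
    _ = (√(2 * π * v) * rexp (-(v * θ ^ 2 / 2)) : ℝ) := by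
        rw [integral_cexp_quadratic hb, hsqrt]
        push_cast
        congr 2
        field_simp
        rw [I_sq]
        ring

end GaussianWave

theorem integral_aeval_hermite_mul_gaussianWave {v : ℝ} (θ : ℝ) (hv : 0 < v) {z u : ℂ}
    (hz : z ^ 2 = 1 - v) (hzu : z * u = v * θ * I) (n : ℕ) :
    ∫ y : ℝ, aeval (y : ℂ) (hermite n) * gaussianWave v θ y
      = (∫ y : ℝ, gaussianWave v θ y) * (z ^ n * aeval u (hermite n)) := by
  set M := ∫ y : ℝ, gaussianWave v θ y
  have hw (P : ℤ[X]) := integrable_aeval_mul_gaussianWave θ hv P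
  refine congrFun (eq_of_two_step_recurrence (v * θ * I) (fun n => (v - 1) * (n + 1))
    (f := fun n => ∫ y : ℝ, aeval (y : ℂ) (hermite n) * gaussianWave v θ y)
    (g := fun n => M * (z ^ n * aeval u (hermite n))) ?_ ?_ ?_ ?_) n
  · intro n
    have hsplit : ∀ y : ℝ, aeval (y : ℂ) (hermite (n + 2)) * gaussianWave v θ y
        = aeval (y : ℂ) (X * hermite (n + 1)) * gaussianWave v θ y
          - (n + 1) * (aeval (y : ℂ) (hermite n) * gaussianWave v θ y) := fun y => by
      rw [aeval_hermite_add_two, map_mul, aeval_X]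
      ring
    have hderiv : ∀ y : ℝ, aeval (y : ℂ) (derivative (hermite (n + 1))) * gaussianWave v θ y
        = (n + 1) * (aeval (y : ℂ) (hermite n) * gaussianWave v θ y) := fun y => by
      rw [derivative_hermite_succ, map_mul]
      simp only [map_add, map_natCast, map_one]
      ring
    simp only [hsplit]
    rw [integral_sub (hw _) ((hw _).const_mul _), integral_X_mul_aeval_mul_gaussianWave θ hv]
    simp only [hderiv, integral_const_mul]
    ring
  · intro n
    rw [aeval_hermite_add_two]
    linear_combination (M * z ^ (n + 1) * aeval u (hermite (n + 1))) * hzu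
      - (M * z ^ n * (n + 1) * aeval u (hermite n)) * hz
  · simp [M]
  · have h := integral_X_mul_aeval_mul_gaussianWave θ hv (1 : ℤ[X])
    simp only [mul_one, derivative_one, map_zero, zero_mul, integral_zero, zero_add, map_one,
      one_mul, aeval_X] at h
    simp only [hermite_one, aeval_X, pow_one, h]
    linear_combination -M * hzu

lemma integral_gaussianReal_zero_one {E : Type*} [NormedAddCommGroup E] [NormedSpace ℝ E]
    (f : ℝ → E) : ∫ x, f x ∂γ = (√(2 * π))⁻¹ • ∫ x, rexp (-x ^ 2 / 2) • f x := by
  rw [γ, ProbabilityTheory.integral_gaussianReal_eq_integral_smul one_ne_zero, ← integral_smul]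
  congr 1 with x
  simp [ProbabilityTheory.gaussianPDFReal, smul_smul]

lemma Hpoly_eq_integral_gaussianWave (n : ℕ) (x : ℂ) :
    Hpoly n x = (√(2 * π) : ℂ)⁻¹ *
      ∫ y : ℝ, aeval (y : ℂ) ((C x + C I * X) ^ n) * gaussianWave 1 0 y := by
  rw [Hpoly, integral_gaussianReal_zero_one, Complex.real_smul, ofReal_inv]
  congr 1
  refine integral_congr_ae (ae_of_all _ fun y => ?_)
  simp only [Complex.real_smul, map_pow, map_add, map_mul, aeval_C, aeval_X,
    Algebra.algebraMap_self, RingHom.id_apply, gaussianWave, ofReal_exp]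
  push_cast
  ring_nf

lemma Hpoly_zero (x : ℂ) : Hpoly 0 x = 1 := by
  simp [Hpoly, γ]

lemma Hpoly_one (x : ℂ) : Hpoly 1 x = x := by
  have h := integral_X_mul_aeval_mul_gaussianWave 0 one_pos (1 : ℂ[X])
  simp only [mul_one, derivative_one, map_zero, zero_mul, integral_zero, zero_add,
    ofReal_zero, ofReal_one, one_mul] at h
  have hsplit : ∀ y : ℝ, aeval (y : ℂ) ((C x + C I * X) ^ 1) * gaussianWave 1 0 y
      = x * (aeval (y : ℂ) ((C x + C I * X) ^ 0) * gaussianWave 1 0 y)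
        + I * (aeval (y : ℂ) (X : ℂ[X]) * gaussianWave 1 0 y) := fun y => by
    simp only [pow_one, pow_zero, map_add, map_mul, map_one, aeval_C, aeval_X,
      Algebra.algebraMap_self, RingHom.id_apply]
    ring
  have hw (P : ℂ[X]) := integrable_aeval_mul_gaussianWave 0 one_pos P
  have h0 := Hpoly_eq_integral_gaussianWave 0 x
  rw [Hpoly_zero] at h0
  rw [Hpoly_eq_integral_gaussianWave]
  simp only [hsplit]
  rw [integral_add ((hw _).const_mul _) ((hw _).const_mul _), integral_const_mul,
    integral_const_mul, h]
  linear_combination -x * h0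

lemma Hpoly_add_two (n : ℕ) (x : ℂ) :
    Hpoly (n + 2) x = x * Hpoly (n + 1) x - (n + 1) * Hpoly n x := by
  simp only [Hpoly_eq_integral_gaussianWave]
  set Q : ℂ[X] := C x + C I * X
  have hw (P : ℂ[X]) := integrable_aeval_mul_gaussianWave 0 one_pos P
  have hsplit : ∀ y : ℝ, aeval (y : ℂ) (Q ^ (n + 2)) * gaussianWave 1 0 y
      = x * (aeval (y : ℂ) (Q ^ (n + 1)) * gaussianWave 1 0 y)
        + I * (aeval (y : ℂ) (X * Q ^ (n + 1)) * gaussianWave 1 0 y) := fun y => by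
    simp only [Q, pow_succ, map_mul, map_add, aeval_C, aeval_X, Algebra.algebraMap_self,
      RingHom.id_apply]
    ring
  have hderiv : ∀ y : ℝ, aeval (y : ℂ) (derivative (Q ^ (n + 1))) * gaussianWave 1 0 y
      = (n + 1) * I * (aeval (y : ℂ) (Q ^ n) * gaussianWave 1 0 y) := fun y => by
    rw [derivative_pow_succ]
    simp only [Q, derivative_mul, derivative_C, derivative_X, zero_mul, zero_add,
      mul_one, map_mul, map_add, map_pow, map_natCast, map_one, aeval_C, aeval_X,
      Algebra.algebraMap_self, RingHom.id_apply]
    ring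
  simp only [hsplit]
  rw [integral_add ((hw _).const_mul _) ((hw _).const_mul _), integral_const_mul,
    integral_const_mul, integral_X_mul_aeval_mul_gaussianWave 0 one_pos]
  simp only [hderiv, integral_const_mul]
  push_cast
  ring_nf
  rw [I_sq]
  ring

theorem Hpoly_eq_aeval_hermite (n : ℕ) (x : ℂ) : Hpoly n x = aeval x (hermite n) := by
  refine congrFun (eq_of_two_step_recurrence x (fun n => -(n + 1)) (f := (Hpoly · x))
    (g := fun n => aeval x (hermite n)) (fun n => ?_) (fun n => ?_) ?_ ?_) n
  · rw [Hpoly_add_two]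
    ring
  · rw [aeval_hermite_add_two]
    ring
  · simp [Hpoly_zero]
  · simp [Hpoly_one]

theorem fourierIntegral_hermite_sum_mul_gaussian {p : ℝ} (hp : 1 < p) (c : ℝ) (N : ℕ)
    (a : ℕ → ℂ) (ξ : ℝ) :
    ∫ y : ℝ, ((∑ ℓ ∈ range (N + 1), a ℓ * Hpoly ℓ (y : ℂ)) * (rexp (-(y ^ 2) / (2 * p)) : ℂ)
        * (c : ℂ)) * cexp (-2 * π * I * ξ * y)
      = (c * √(2 * π * p) * rexp (-(2 * π ^ 2 * p * ξ ^ 2)) : ℝ) *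
        ∑ ℓ ∈ range (N + 1), a ℓ * (I * (√(p - 1) : ℂ)) ^ ℓ
          * Hpoly ℓ ((-2 * π * p / √(p - 1) * ξ : ℝ) : ℂ) := by
  have hp0 : 0 < p := by linarith
  have hs : (√(p - 1) : ℂ) ≠ 0 := ofReal_ne_zero.2 (Real.sqrt_pos.2 (by linarith)).ne'
  have hz : (I * (√(p - 1) : ℂ)) ^ 2 = 1 - p := by
    rw [mul_pow, I_sq, ← ofReal_pow, Real.sq_sqrt (by linarith)]
    push_cast
    ring
  have hzu : I * (√(p - 1) : ℂ) * ((-2 * π * p / √(p - 1) * ξ : ℝ) : ℂ)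
      = p * (-2 * π * ξ : ℝ) * I := by
    push_cast
    field_simp
  have hintegrand : ∀ y : ℝ, ((∑ ℓ ∈ range (N + 1), a ℓ * Hpoly ℓ (y : ℂ))
        * (rexp (-(y ^ 2) / (2 * p)) : ℂ) * (c : ℂ)) * cexp (-2 * π * I * ξ * y)
      = c * ∑ ℓ ∈ range (N + 1),
          a ℓ * (aeval (y : ℂ) (hermite ℓ) * gaussianWave p (-2 * π * ξ) y) := fun y => by
    have hwave : (rexp (-(y ^ 2) / (2 * p)) : ℂ) * cexp (-2 * π * I * ξ * y)
        = gaussianWave p (-2 * π * ξ) y := by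
      rw [gaussianWave, ofReal_exp, ← Complex.exp_add]
      push_cast
      ring_nf
    simp only [Hpoly_eq_aeval_hermite, ← hwave, Finset.mul_sum, Finset.sum_mul]
    refine Finset.sum_congr rfl fun ℓ _ => ?_
    ring
  rw [integral_congr_ae (ae_of_all _ hintegrand), integral_const_mul,
    integral_finsetSum _ fun ℓ _ => (integrable_aeval_mul_gaussianWave _ hp0 _).const_mul _]
  simp only [integral_const_mul, integral_aeval_hermite_mul_gaussianWave _ hp0 hz hzu,
    integral_gaussianWave _ hp0, Finset.mul_sum, Hpoly_eq_aeval_hermite]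
  refine Finset.sum_congr rfl fun ℓ _ => ?_
  push_cast
  ring_nf

lemma integral_exp_neg_sq_mul_comp_mul {κ : ℝ} (hκ : κ ≠ 0) (g : ℝ → ℝ) :
    ∫ ξ : ℝ, rexp (-(κ * ξ) ^ 2 / 2) * g (κ * ξ) = |κ|⁻¹ * √(2 * π) * ∫ x, g x ∂γ := by
  rw [integral_gaussianReal_zero_one, smul_eq_mul,
    Measure.integral_comp_mul_left (fun x => rexp (-x ^ 2 / 2) * g x) κ]
  simp only [smul_eq_mul, abs_inv]
  field_simp

lemma babenkoBeckner_const_rpow {p q : ℝ} (hp : 1 < p) (hq : q = p / (p - 1)) :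
    ((2 * π) ^ (-1 / (2 * p)) * √(2 * π * p)) ^ q * (|-2 * π * p / √(p - 1)|⁻¹ * √(2 * π))
      = (p ^ (1 / (2 * p)) / q ^ (1 / (2 * q))) ^ q := by
  have hp0 : 0 < p := by linarith
  have hp1 : 0 < p - 1 := by linarith
  have hq0 : 0 < q := hq ▸ div_pos hp0 hp1
  have h2π : 0 < 2 * π := by positivity
  have hκ : |-2 * π * p / √(p - 1)| = 2 * π * p / √(p - 1) := by
    rw [neg_mul, neg_mul, neg_div, abs_neg, abs_of_pos (by positivity)]
  have hsqrt : 0 < √(p - 1) := Real.sqrt_pos.2 hp1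
  have hA : Real.log ((2 * π) ^ (-1 / (2 * p)) * √(2 * π * p))
      = -1 / (2 * p) * Real.log (2 * π) + (Real.log (2 * π) + Real.log p) / 2 := by
    rw [Real.log_mul (by positivity) (by positivity), Real.log_rpow h2π,
      Real.log_sqrt (by positivity), Real.log_mul h2π.ne' hp0.ne']
  have hB : Real.log ((2 * π * p / √(p - 1))⁻¹ * √(2 * π))
      = -(Real.log (2 * π) + Real.log p - Real.log (p - 1) / 2) + Real.log (2 * π) / 2 := by
    rw [Real.log_mul (by positivity) (by positivity), Real.log_inv,
      Real.log_div (by positivity) hsqrt.ne', Real.log_mul h2π.ne' hp0.ne',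
      Real.log_sqrt hp1.le, Real.log_sqrt h2π.le]
  have hC : Real.log (p ^ (1 / (2 * p)) / q ^ (1 / (2 * q)))
      = 1 / (2 * p) * Real.log p - 1 / (2 * q) * (Real.log p - Real.log (p - 1)) := by
    rw [Real.log_div (by positivity) (by positivity), Real.log_rpow hp0, Real.log_rpow hq0, hq,
      Real.log_div hp0.ne' hp1.ne']
  rw [hκ, ← Real.exp_log (by positivity : 0 < ((2 * π) ^ (-1 / (2 * p)) * √(2 * π * p)) ^ q
      * ((2 * π * p / √(p - 1))⁻¹ * √(2 * π))),
    ← Real.exp_log (by positivity : 0 < (p ^ (1 / (2 * p)) / q ^ (1 / (2 * q))) ^ q),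
    Real.log_mul (by positivity) (by positivity), Real.log_rpow (by positivity), hA, hB,
    Real.log_rpow (by positivity), hC, hq]
  congr 1
  field_simp
  ring

theorem stmt14_general (p q : ℝ) (hp : 1 < p) (hq : q = p / (p - 1))
    (N : ℕ) (a : ℕ → ℂ) :
    (p ^ (1 / (2 * p)) / q ^ (1 / (2 * q))) *
        (∫ x : ℝ, ‖(∑ ℓ ∈ Finset.range (N + 1),
            a ℓ * (Complex.I * (Real.sqrt (p - 1) : ℂ)) ^ ℓ * Hpoly ℓ (x : ℂ))‖ ^ q ∂γ) ^ (1 / q)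
      = (∫ ξ : ℝ, ‖(∫ y : ℝ,
            ((∑ ℓ ∈ Finset.range (N + 1), a ℓ * Hpoly ℓ (y : ℂ))
              * (Real.exp (-(y ^ 2) / (2 * p)) : ℂ)
              * (((2 * Real.pi) ^ (-(1 : ℝ) / (2 * p)) : ℝ) : ℂ))
            * Complex.exp (-2 * Real.pi * Complex.I * ξ * y))‖ ^ q) ^ (1 / q) := by
  have hp1 : 0 < p - 1 := by linarith
  have hq0 : 0 < q := hq ▸ div_pos (by linarith) hp1
  set κ := -2 * π * p / √(p - 1)
  set G : ℝ → ℂ := fun x => ∑ ℓ ∈ range (N + 1), a ℓ * (I * (√(p - 1) : ℂ)) ^ ℓ * Hpoly ℓ x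
  have hκ : κ ≠ 0 := div_ne_zero (by nlinarith [Real.pi_pos]) (Real.sqrt_pos.2 hp1).ne'
  have hexp : ∀ ξ : ℝ, rexp (-(2 * π ^ 2 * p * ξ ^ 2)) ^ q = rexp (-(κ * ξ) ^ 2 / 2) := fun ξ => by
    rw [← Real.exp_mul, mul_pow, div_pow, Real.sq_sqrt hp1.le, hq]
    congr 1
    field_simp
  have hnorm : ∀ ξ : ℝ, ‖(∫ y : ℝ, ((∑ ℓ ∈ range (N + 1), a ℓ * Hpoly ℓ (y : ℂ))
        * (rexp (-(y ^ 2) / (2 * p)) : ℂ) * (((2 * π) ^ (-(1 : ℝ) / (2 * p)) : ℝ) : ℂ))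
        * cexp (-2 * π * I * ξ * y))‖ ^ q
      = ((2 * π) ^ (-1 / (2 * p)) * √(2 * π * p)) ^ q
        * (rexp (-(κ * ξ) ^ 2 / 2) * ‖G (κ * ξ)‖ ^ q) := fun ξ => by
    rw [fourierIntegral_hermite_sum_mul_gaussian hp, norm_mul, norm_real,
      Real.norm_of_nonneg (by positivity), Real.mul_rpow (by positivity) (by positivity),
      Real.mul_rpow (by positivity) (by positivity), hexp, neg_div]
    ring
  rw [integral_congr_ae (ae_of_all _ hnorm), integral_const_mul,
    integral_exp_neg_sq_mul_comp_mul hκ (fun x => ‖G x‖ ^ q), ← mul_assoc,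
    babenkoBeckner_const_rpow hp hq,
    Real.mul_rpow (by positivity) (integral_nonneg fun _ => by positivity), one_div q,
    Real.rpow_rpow_inv (by positivity) hq0.ne']

/-- identification of the `s = 0` endpoint with the `L^q` norm of
the Fourier transform of `f(y) := g̃(y) e^{-y²/(2p)} (2π)^{-1/(2p)}`. -/
theorem stmt14 (p q : ℝ) (hp : 1 < p) (hp2 : p ≤ 2) (hq : q = p / (p - 1))
    (N : ℕ) (a : ℕ → ℂ) :
    (p ^ (1 / (2 * p)) / q ^ (1 / (2 * q))) *
        (∫ x : ℝ, ‖(∑ ℓ ∈ Finset.range (N + 1),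
            a ℓ * (Complex.I * (Real.sqrt (p - 1) : ℂ)) ^ ℓ * Hpoly ℓ (x : ℂ))‖ ^ q ∂γ) ^ (1 / q)
      = (∫ ξ : ℝ, ‖(∫ y : ℝ,
            ((∑ ℓ ∈ Finset.range (N + 1), a ℓ * Hpoly ℓ (y : ℂ))
              * (Real.exp (-(y ^ 2) / (2 * p)) : ℂ)
              * (((2 * Real.pi) ^ (-(1 : ℝ) / (2 * p)) : ℝ) : ℂ))
            * Complex.exp (-2 * Real.pi * Complex.I * ξ * y))‖ ^ q) ^ (1 / q) :=
  stmt14_general p q hp hq N a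

end
end
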